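/- arXiv:2501.15605 — 7 statements merged into one kernel-verified Lean document; each statement's English description precedes it below -/
import Mathlib

section
/- Let μ ∈ 𝒫_c(ℝ^m), let f ∈ C_c^∞(ℝ^m) be a smooth compactly supported function, and let R > 0. Then there exists δ > 0 such that for every t ∈ [0, δ]: the measure ν_t := (id + t∇f)_#μ belongs to 𝒫(B_R(μ)), and the set Γ₂(μ, ν_t) of W₂-optimal couplings between μ and ν_t consists of exactly one element, namely the pushforward of μ under the map x ↦ (x, x + t∇f(x)). -/
open MeasureTheory Metric Set
open scoped RealInnerProductSpace ENNReal

noncomputable section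

/-- `ℝ^m` with its Euclidean (inner product) structure. -/
abbrev Em (m : ℕ) := EuclideanSpace ℝ (Fin m)

namespace Paper

variable {m : ℕ}

/-- `γ ∈ Γ(μ,ν)`: `γ` is a transport plan (coupling) between `μ` and `ν`. -/
def IsCoupling (γ : Measure (Em m × Em m)) (μ ν : Measure (Em m)) : Prop :=
  γ.map Prod.fst = μ ∧ γ.map Prod.snd = ν

/-- The quadratic transport cost of a plan. -/
def cost2 (γ : Measure (Em m × Em m)) : ℝ :=
  ∫ p, ‖p.1 - p.2‖ ^ 2 ∂γ

/-- `γ ∈ Γ₂(μ,ν)`: `γ` is a coupling attaining the infimum defining `W₂(μ,ν)`. -/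
def IsOptCoupling (γ : Measure (Em m × Em m)) (μ ν : Measure (Em m)) : Prop :=
  IsCoupling γ μ ν ∧
    ∀ γ' : Measure (Em m × Em m), IsCoupling γ' μ ν → cost2 γ ≤ cost2 γ'

/-- The 2-Wasserstein distance. -/
def W2 (μ ν : Measure (Em m)) : ℝ :=
  Real.sqrt (sInf {r : ℝ |
    ∃ γ : Measure (Em m × Em m), IsCoupling γ μ ν ∧ r = cost2 γ})

/-- The 1-Wasserstein distance. -/
def W1 (μ ν : Measure (Em m)) : ℝ :=
  sInf {r : ℝ |
    ∃ γ : Measure (Em m × Em m), IsCoupling γ μ ν ∧ r = ∫ p, ‖p.1 - p.2‖ ∂γ}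

/-- The topological support of a measure on a metric space. -/
def msupport {X : Type*} [PseudoMetricSpace X] [MeasurableSpace X] (μ : Measure X) : Set X :=
  {x | ∀ r > (0 : ℝ), 0 < μ (ball x r)}

/-- The `R`-fattening `B_R(μ)` of the support of `μ`. -/
def fattening (μ : Measure (Em m)) (R : ℝ) : Set (Em m) :=
  ⋃ x ∈ msupport μ, ball x R

/-- `μ ∈ 𝒫_c(ℝ^m)`: `μ` is concentrated on a compact set. -/
def IsCptSupp (μ : Measure (Em m)) : Prop :=
  ∃ K : Set (Em m), IsCompact K ∧ μ Kᶜ = 0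

/-- `∫ ⟨α(x), y - x⟩ dγ`. -/
def pairing (α : Em m → Em m) (γ : Measure (Em m × Em m)) : ℝ :=
  ∫ p : Em m × Em m, (inner ℝ (α p.1) (p.2 - p.1) : ℝ) ∂γ

/-- `α ∈ ∂⁺U(μ)`, the localized Fréchet superdifferential of `U` at `μ`. -/
def InSuperDiff (U : Measure (Em m) → ℝ) (μ : Measure (Em m)) (α : Em m → Em m) : Prop :=
  MemLp α 2 μ ∧
  ∀ R > (0 : ℝ), ∀ ε > (0 : ℝ), ∃ δ > (0 : ℝ), ∀ ν : Measure (Em m),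
    IsProbabilityMeasure ν → ν (fattening μ R) = 1 → W2 μ ν ≤ δ →
      U ν - U μ ≤ sSup {r : ℝ | ∃ γ, IsOptCoupling γ μ ν ∧ r = pairing α γ} + ε * W2 μ ν

/-- `β ∈ ∂⁻U(μ)`, the localized Fréchet subdifferential of `U` at `μ`. -/
def InSubDiff (U : Measure (Em m) → ℝ) (μ : Measure (Em m)) (β : Em m → Em m) : Prop :=
  MemLp β 2 μ ∧
  ∀ R > (0 : ℝ), ∀ ε > (0 : ℝ), ∃ δ > (0 : ℝ), ∀ ν : Measure (Em m),
    IsProbabilityMeasure ν → ν (fattening μ R) = 1 → W2 μ ν ≤ δ →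
      sInf {r : ℝ | ∃ γ, IsOptCoupling γ μ ν ∧ r = pairing β γ} - ε * W2 μ ν ≤ U ν - U μ

/-- `p ∈ D⁺φ(x)`, the Fréchet superdifferential of `φ` at `x`. -/
def SuperDiffPt (φ : Em m → ℝ) (x p : Em m) : Prop :=
  ∀ ε > (0 : ℝ), ∃ δ > (0 : ℝ), ∀ y : Em m, ‖y - x‖ ≤ δ →
    φ y - φ x - (inner ℝ p (y - x) : ℝ) ≤ ε * ‖y - x‖

/-- `φ` is locally semiconcave with linear modulus on `ℝ^m`. -/
def LocSemiconcave (φ : Em m → ℝ) : Prop :=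
  ∀ R > (0 : ℝ), ∃ C ≥ (0 : ℝ), ∀ x ∈ ball (0 : Em m) R, ∀ y ∈ ball (0 : Em m) R,
    ∀ t ∈ Icc (0 : ℝ) 1,
      (1 - t) * φ x + t * φ y - φ ((1 - t) • x + t • y) ≤ C * t * (1 - t) * ‖x - y‖ ^ 2

/-- The potential energy functional induced by `φ`. -/
def potential (φ : Em m → ℝ) (μ : Measure (Em m)) : ℝ :=
  ∫ x, φ x ∂μ

end Paper

open Paper

open scoped NNReal

variable {m : ℕ}

lemma integrable_of_compact_concentration {X : Type*} [MeasurableSpace X] [TopologicalSpace X]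
    [OpensMeasurableSpace X] {γ : Measure X} [IsFiniteMeasure γ] {A : Set X} (hA : IsCompact A)
    (h0 : γ Aᶜ = 0) {h : X → ℝ} (hh : Continuous h) : Integrable h γ := by
  obtain ⟨C, hC⟩ := hA.exists_bound_of_continuousOn hh.continuousOn
  refine Integrable.mono' (integrable_const C) hh.aestronglyMeasurable ?_
  have hae : ∀ᵐ x ∂γ, x ∈ A := by
    rw [ae_iff]
    exact h0
  filter_upwards [hae] with x hx using hC x hx

lemma gradient_contDiff {f : Em m → ℝ} (hf : ContDiff ℝ (⊤ : ℕ∞) f) :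
    ContDiff ℝ (⊤ : ℕ∞) (gradient f) := by
  have h1 : ContDiff ℝ (⊤ : ℕ∞) (fderiv ℝ f) := hf.fderiv_right (by simp)
  exact ((InnerProductSpace.toDual ℝ (Em m)).symm.contDiff).comp h1

lemma gradient_compactSupport {f : Em m → ℝ} (hfc : HasCompactSupport f) :
    HasCompactSupport (gradient f) :=
  (hfc.fderiv ℝ).comp_left (g := (InnerProductSpace.toDual ℝ (Em m)).symm) (map_zero _)

lemma grad_taylor {f : Em m → ℝ} (hf : ContDiff ℝ (⊤ : ℕ∞) f) {L : ℝ} (hL0 : 0 ≤ L)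
    (hLip : ∀ a b : Em m, ‖gradient f a - gradient f b‖ ≤ L * ‖a - b‖) (z x : Em m) :
    (inner ℝ (gradient f z) (x - z) : ℝ) ≤ f x - f z + L * ‖x - z‖ ^ 2 := by
  set D := InnerProductSpace.toDual ℝ (Em m)
  set F : Em m → ℝ := fun w => f w - D (gradient f z) w with hF
  have hder : ∀ w ∈ segment ℝ z x,
      HasFDerivWithinAt F (fderiv ℝ f w - D (gradient f z)) (segment ℝ z x) w := by
    intro w _
    exact (((hf.differentiable (by simp) w).hasFDerivAt).sub
      ((D (gradient f z)).hasFDerivAt)).hasFDerivWithinAt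
  have hfd : ∀ w : Em m, fderiv ℝ f w = D (gradient f w) := by
    intro w
    simp [gradient, D]
  have hbound : ∀ w ∈ segment ℝ z x, ‖fderiv ℝ f w - D (gradient f z)‖ ≤ L * ‖x - z‖ := by
    intro w hw
    have hwz : ‖w - z‖ ≤ ‖x - z‖ := by
      rw [segment_eq_image'] at hw
      obtain ⟨θ, hθ, rfl⟩ := hw
      rw [add_sub_cancel_left, norm_smul, Real.norm_eq_abs, abs_of_nonneg hθ.1]
      nlinarith [norm_nonneg (x - z), hθ.2]
    calc ‖fderiv ℝ f w - D (gradient f z)‖ = ‖gradient f w - gradient f z‖ := by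
          rw [hfd w, ← map_sub]
          exact D.norm_map _
      _ ≤ L * ‖w - z‖ := hLip w z
      _ ≤ L * ‖x - z‖ := by nlinarith
  have hmvt := (convex_segment z x).norm_image_sub_le_of_norm_hasFDerivWithin_le hder hbound
    (left_mem_segment ℝ z x) (right_mem_segment ℝ z x)
  have habs : |F x - F z| ≤ L * ‖x - z‖ * ‖x - z‖ := by
    simpa [Real.norm_eq_abs] using hmvt
  have hDapp : ∀ w, D (gradient f z) w = (inner ℝ (gradient f z) w : ℝ) := fun w =>
    InnerProductSpace.toDual_apply_apply
  have hFx : F x - F z = f x - f z - (inner ℝ (gradient f z) (x - z) : ℝ) := by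
    rw [hF]
    simp only [hDapp]
    rw [inner_sub_right]
    ring
  have h2 := abs_le.mp habs
  nlinarith [h2.1, h2.2, sq_abs ‖x - z‖, sq_nonneg ‖x - z‖]


set_option maxHeartbeats 1000000 in
/-- Lemma `lem:smooth-approx`: for `μ ∈ 𝒫_c(ℝ^m)`, `f ∈ C_c^∞(ℝ^m)` and
`R > 0`, there is `δ > 0` such that for every `t ∈ [0,δ]` the measure
`ν_t := (id + t∇f)_#μ` is concentrated on the `R`-fattening `B_R(μ)` of `supp μ`, and the
set of `W₂`-optimal couplings between `μ` and `ν_t` is exactly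
`{(id × (id + t∇f))_#μ}`. -/
theorem statement7 {m : ℕ} (μ : Measure (Em m)) [IsProbabilityMeasure μ]
    (hμ : IsCptSupp μ) (f : Em m → ℝ) (hf : ContDiff ℝ (⊤ : ℕ∞) f)
    (hfc : HasCompactSupport f) (R : ℝ) (hR : 0 < R) :
    ∃ δ > (0 : ℝ), ∀ t ∈ Icc (0 : ℝ) δ,
      (μ.map fun x => x + t • gradient f x) (fattening μ R) = 1 ∧
      {γ : Measure (Em m × Em m) |
          IsOptCoupling γ μ (μ.map fun x => x + t • gradient f x)} =
        {μ.map fun x => (x, x + t • gradient f x)} := by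
  obtain ⟨K, hKc, hKn⟩ := hμ
  set g : Em m → Em m := gradient f with hg
  have hgsm : ContDiff ℝ (⊤ : ℕ∞) g := gradient_contDiff hf
  have hgcont : Continuous g := hgsm.continuous
  have hgcs : HasCompactSupport g := gradient_compactSupport hfc
  obtain ⟨M, hM'⟩ := hgcont.norm.bounded_above_of_compact_support hgcs.norm
  have hM : ∀ x, ‖g x‖ ≤ M := fun x => by simpa using hM' x
  have hM0 : 0 ≤ M := le_trans (norm_nonneg _) (hM 0)
  obtain ⟨Lnn, hLnn⟩ : ∃ C : NNReal, LipschitzWith C g :=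
    hgsm.lipschitzWith_of_hasCompactSupport hgcs (by simp)
  set L : ℝ := (Lnn : ℝ) with hLdef
  have hL0 : 0 ≤ L := Lnn.coe_nonneg
  have hLips : ∀ a b : Em m, ‖g a - g b‖ ≤ L * ‖a - b‖ := by
    intro a b
    simpa [dist_eq_norm] using hLnn.dist_le_mul a b
  obtain ⟨ρ₀, hρ₀⟩ : ∃ r, K ⊆ closedBall 0 r := hKc.isBounded.subset_closedBall 0
  have hρ₀0 : ∀ x ∈ K, ‖x‖ ≤ ρ₀ := fun x hx => by
    simpa [mem_closedBall, dist_eq_norm] using hρ₀ hx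
  refine ⟨min (min (R / (2 * (M + 1))) (1 / (M + 1))) (1 / (4 * (L + 1))),
    lt_min (lt_min (by positivity) (by positivity)) (by positivity), ?_⟩
  rintro t ⟨ht0, htδ⟩
  have htb : t ≤ 1 / (M + 1) := le_trans htδ (le_trans (min_le_left _ _) (min_le_right _ _))
  have hta : t ≤ R / (2 * (M + 1)) := le_trans htδ (le_trans (min_le_left _ _) (min_le_left _ _))
  have htc : t ≤ 1 / (4 * (L + 1)) := le_trans htδ (min_le_right _ _)
  have htM1 : t * M ≤ 1 := by
    have h1 : t * M ≤ (1 / (M + 1)) * M := mul_le_mul_of_nonneg_right htb hM0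
    have h2 : (1 / (M + 1)) * M ≤ 1 := by
      rw [div_mul_eq_mul_div, one_mul, div_le_one (by linarith)]
      linarith
    linarith
  have htMR : t * M < R := by
    have h1 : t * M ≤ (R / (2 * (M + 1))) * M := mul_le_mul_of_nonneg_right hta hM0
    have h2 : (R / (2 * (M + 1))) * M < R := by
      rw [div_mul_eq_mul_div, div_lt_iff₀ (by linarith)]
      nlinarith
    linarith
  have htL : t * L ≤ 1 / 4 := by
    have h1 : t * L ≤ (1 / (4 * (L + 1))) * L := mul_le_mul_of_nonneg_right htc hL0
    have h2 : (1 / (4 * (L + 1))) * L ≤ 1 / 4 := by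
      rw [div_mul_eq_mul_div, one_mul, div_le_div_iff₀ (by linarith) (by norm_num)]
      nlinarith
    linarith
  set T : Em m → Em m := fun x => x + t • g x with hT
  have hTcont : Continuous T := continuous_id.add (hgcont.const_smul t)
  have hTmeas : Measurable T := hTcont.measurable
  haveI hνprob : IsProbabilityMeasure (μ.map T) := Measure.isProbabilityMeasure_map hTmeas.aemeasurable
  have hTdist : ∀ x, ‖T x - x‖ ≤ t * M := by
    intro x
    rw [hT]
    simp only [add_sub_cancel_left]
    rw [norm_smul, Real.norm_eq_abs, abs_of_nonneg ht0]
    exact mul_le_mul_of_nonneg_left (hM x) ht0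
  -- Part 1
  have hsuppnull : μ (msupport μ)ᶜ = 0 := by
    apply measure_null_of_locally_null
    intro x hx
    simp only [msupport, mem_compl_iff, mem_setOf_eq] at hx
    push_neg at hx
    obtain ⟨r, hr, hball⟩ := hx
    exact ⟨ball x r, mem_nhdsWithin_of_mem_nhds (ball_mem_nhds x hr), le_zero_iff.mp hball⟩
  have hfatmeas : MeasurableSet (fattening μ R) :=
    (isOpen_biUnion fun x _ => isOpen_ball).measurableSet
  have part1 : (μ.map T) (fattening μ R) = 1 := by
    rw [Measure.map_apply hTmeas hfatmeas]
    refine le_antisymm prob_le_one ?_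
    have hsub : msupport μ ⊆ T ⁻¹' fattening μ R := by
      intro x hx
      refine mem_preimage.mpr (mem_biUnion hx ?_)
      rw [mem_ball, dist_eq_norm]
      exact lt_of_le_of_lt (hTdist x) htMR
    calc (1 : ℝ≥0∞) = μ univ := measure_univ.symm
      _ ≤ μ (msupport μ) + μ (msupport μ)ᶜ := by
          rw [← union_compl_self (msupport μ)]
          exact measure_union_le _ _
      _ = μ (msupport μ) := by rw [hsuppnull, add_zero]
      _ ≤ μ (T ⁻¹' fattening μ R) := measure_mono hsub
  -- the inverse map S
  have hcontr : ∀ y : Em m, ContractingWith (1/2 : ℝ≥0) (fun x => y - t • g x) := by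
    intro y
    constructor
    · rw [← NNReal.coe_lt_coe]
      norm_num
    · apply LipschitzWith.of_dist_le_mul
      intro a b
      have e1 : dist (y - t • g a) (y - t • g b) = ‖t • (g b - g a)‖ := by
        rw [dist_eq_norm, smul_sub]
        congr 1
        abel
      rw [e1, norm_smul, Real.norm_eq_abs, abs_of_nonneg ht0, dist_eq_norm]
      have hab := hLips b a
      rw [norm_sub_rev b a] at hab
      have hcoe : ((1/2 : ℝ≥0) : ℝ) = 1/2 := by norm_num
      rw [hcoe]
      nlinarith [mul_le_mul_of_nonneg_left hab ht0,
        mul_le_mul_of_nonneg_right htL (norm_nonneg (a - b)), norm_nonneg (a - b)]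
  set S : Em m → Em m := fun y => ContractingWith.fixedPoint _ (hcontr y) with hS
  have hSfix : ∀ y, y - t • g (S y) = S y := fun y => (hcontr y).fixedPoint_isFixedPt
  have hTS : ∀ y, T (S y) = y := by
    intro y
    rw [hT]
    show S y + t • g (S y) = y
    nth_rewrite 1 [← hSfix y]
    abel
  have hST : ∀ x, S (T x) = x := by
    intro x
    refine ((hcontr (T x)).fixedPoint_unique ?_).symm
    show T x - t • g x = x
    rw [hT]
    show (x + t • g x) - t • g x = x
    abel
  have hSlip : ∀ y y', ‖S y - S y'‖ ≤ 2 * ‖y - y'‖ := by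
    intro y y'
    have e : (y - t • g (S y)) - (y' - t • g (S y')) = S y - S y' := by
      rw [hSfix y, hSfix y']
    have e2 : ‖S y - S y'‖ ≤ ‖y - y'‖ + ‖t • (g (S y) - g (S y'))‖ := by
      rw [← e]
      have e4 : (y - t • g (S y)) - (y' - t • g (S y')) = (y - y') - t • (g (S y) - g (S y')) := by
        rw [smul_sub]
        abel
      rw [e4]
      exact norm_sub_le _ _
    have e3 : ‖t • (g (S y) - g (S y'))‖ ≤ (1/2) * ‖S y - S y'‖ := by
      rw [norm_smul, Real.norm_eq_abs, abs_of_nonneg ht0]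
      have hab := hLips (S y) (S y')
      nlinarith [mul_le_mul_of_nonneg_left hab ht0,
        mul_le_mul_of_nonneg_right htL (norm_nonneg (S y - S y')), norm_nonneg (S y - S y')]
    linarith
  have hScont : Continuous S := by
    refine (LipschitzWith.of_dist_le_mul (K := 2) ?_).continuous
    intro a b
    rw [dist_eq_norm, dist_eq_norm]
    have hcoe : ((2 : ℝ≥0) : ℝ) = 2 := by norm_num
    rw [hcoe]
    exact hSlip a b
  -- key pointwise inequality
  have key : ∀ x y : Em m,
      ‖S y - y‖^2 + 2*t*f (S y) + (1 - 2*t*L) * ‖x - S y‖^2 ≤ ‖x - y‖^2 + 2*t*f x := by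
    intro x y
    have hxy : x - y = (x - S y) + (S y - y) := by abel
    have hne : ‖x - y‖^2 = ‖x - S y‖^2 + 2 * (inner ℝ (x - S y) (S y - y) : ℝ) + ‖S y - y‖^2 := by
      rw [hxy]
      exact norm_add_sq_real _ _
    have hSy : S y - y = -(t • g (S y)) := by
      nth_rewrite 1 [← hSfix y]
      abel
    have hinner : (inner ℝ (x - S y) (S y - y) : ℝ) = -(t * (inner ℝ (g (S y)) (x - S y) : ℝ)) := by
      rw [hSy, inner_neg_right, real_inner_smul_right, real_inner_comm]
    have htay := grad_taylor hf hL0 hLips (S y) x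
    rw [← hg] at htay
    have hprod : 0 ≤ t * ((f x - f (S y) + L * ‖x - S y‖^2) - (inner ℝ (g (S y)) (x - S y) : ℝ)) :=
      mul_nonneg ht0 (by linarith)
    nlinarith [hne, hinner, hprod]
  -- big compact set
  set Kb : Set (Em m) := closedBall (0 : Em m) (ρ₀ + 1) with hKb
  have hKbc : IsCompact Kb := isCompact_closedBall _ _
  have hKbm : MeasurableSet Kb := measurableSet_closedBall
  have hμKb : μ Kbᶜ = 0 := by
    apply measure_mono_null (compl_subset_compl.mpr ?_) hKn
    intro x hx
    rw [hKb, mem_closedBall, dist_eq_norm, sub_zero]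
    linarith [hρ₀0 x hx]
  have hνKb : (μ.map T) Kbᶜ = 0 := by
    rw [Measure.map_apply hTmeas hKbm.compl]
    apply measure_mono_null ?_ hKn
    intro x hx
    simp only [mem_preimage, mem_compl_iff] at hx ⊢
    intro hxK
    apply hx
    rw [hKb, mem_closedBall, dist_eq_norm, sub_zero]
    have h1 : ‖T x‖ ≤ ‖x‖ + ‖T x - x‖ := by
      have := norm_add_le x (T x - x)
      simpa using this
    have := hTdist x
    have := hρ₀0 x hxK
    linarith
  set ν := μ.map T with hν
  have hcoupprob : ∀ γ : Measure (Em m × Em m), IsCoupling γ μ ν → IsProbabilityMeasure γ := by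
    intro γ hγ
    constructor
    have h1 : γ Set.univ = γ.map Prod.fst Set.univ := by
      rw [Measure.map_apply measurable_fst MeasurableSet.univ]
      rfl
    rw [h1, hγ.1, measure_univ]
  have hconc : ∀ γ : Measure (Em m × Em m), IsCoupling γ μ ν → γ (Kb ×ˢ Kb)ᶜ = 0 := by
    intro γ hγ
    have h1 : γ (Prod.fst ⁻¹' Kbᶜ) = 0 := by
      calc γ (Prod.fst ⁻¹' Kbᶜ) = (γ.map Prod.fst) Kbᶜ :=
            (Measure.map_apply measurable_fst hKbm.compl).symm
        _ = μ Kbᶜ := by rw [hγ.1]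
        _ = 0 := hμKb
    have h2 : γ (Prod.snd ⁻¹' Kbᶜ) = 0 := by
      calc γ (Prod.snd ⁻¹' Kbᶜ) = (γ.map Prod.snd) Kbᶜ :=
            (Measure.map_apply measurable_snd hKbm.compl).symm
        _ = ν Kbᶜ := by rw [hγ.2]
        _ = 0 := hνKb
    apply measure_mono_null ?_ (measure_union_null h1 h2)
    intro p hp
    simp only [mem_compl_iff, mem_prod, not_and_or] at hp
    rcases hp with h | h
    · exact Or.inl h
    · exact Or.inr h
  have hint : ∀ (γ : Measure (Em m × Em m)), IsCoupling γ μ ν →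
      ∀ (h : Em m × Em m → ℝ), Continuous h → Integrable h γ := by
    intro γ hγ h hh
    haveI := hcoupprob γ hγ
    exact integrable_of_compact_concentration (hKbc.prod hKbc) (hconc γ hγ) hh
  have hintμ : ∀ (h : Em m → ℝ), Continuous h → Integrable h μ := fun h hh =>
    integrable_of_compact_concentration hKbc hμKb hh
  -- the candidate optimal coupling
  set i : Em m → Em m × Em m := fun x => (x, x + t • g x) with hi
  have hiT : i = fun x => (x, T x) := by rw [hi, hT]
  have himeas : Measurable i := by
    rw [hiT]
    exact measurable_id.prodMk hTmeas
  set γ₀ := μ.map i with hγ₀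
  have hγ₀coup : IsCoupling γ₀ μ ν := by
    constructor
    · rw [hγ₀, Measure.map_map measurable_fst himeas]
      have : Prod.fst ∘ i = id := by
        rw [hiT]
        rfl
      rw [this, Measure.map_id]
    · rw [hν, hγ₀, Measure.map_map measurable_snd himeas]
      have : Prod.snd ∘ i = T := by
        rw [hiT]
        rfl
      rw [this]
  -- integral identities
  set G : Em m → ℝ := fun y => ‖S y - y‖^2 + 2*t*f (S y) with hG
  have hGcont : Continuous G := by
    rw [hG]
    exact ((hScont.sub continuous_id).norm.pow 2).add
      (continuous_const.mul (hf.continuous.comp hScont))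
  have hsq : Continuous (fun p : Em m × Em m => ‖p.1 - p.2‖^2) :=
    (continuous_fst.sub continuous_snd).norm.pow 2
  have hqcont : Continuous (fun p : Em m × Em m => ‖p.1 - S p.2‖^2) :=
    (continuous_fst.sub (hScont.comp continuous_snd)).norm.pow 2
  have hfint : Integrable f μ := hintμ f hf.continuous
  have hGT : ∀ x, G (T x) = ‖x - T x‖^2 + 2*t*f x := by
    intro x
    rw [hG]
    simp only [hST x]
  have hGν : ∫ y, G y ∂ν = ∫ x, ‖x - T x‖^2 ∂μ + 2*t*(∫ x, f x ∂μ) := by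
    rw [hν, integral_map hTmeas.aemeasurable hGcont.aestronglyMeasurable]
    simp_rw [hGT]
    rw [integral_add (hintμ (fun x => ‖x - T x‖^2) ((continuous_id'.sub hTcont).norm.pow 2))
      ((hfint.const_mul (2*t)))]
    rw [integral_const_mul]
  have hcost₀ : cost2 γ₀ = ∫ y, G y ∂ν - 2*t*(∫ x, f x ∂μ) := by
    rw [hγ₀]
    simp only [cost2]
    rw [integral_map himeas.aemeasurable hsq.aestronglyMeasurable]
    rw [hiT]
    simp only
    rw [hGν]
    ring
  have hmain : ∀ γ' : Measure (Em m × Em m), IsCoupling γ' μ ν →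
      cost2 γ₀ + (1 - 2*t*L) * ∫ p, ‖p.1 - S p.2‖^2 ∂γ' ≤ cost2 γ' := by
    intro γ' hγ'
    haveI := hcoupprob γ' hγ'
    have hW : ∀ p : Em m × Em m,
        0 ≤ (‖p.1 - p.2‖^2 + 2*t*f p.1) - (G p.2 + (1 - 2*t*L) * ‖p.1 - S p.2‖^2) := by
      intro p
      have hk := key p.1 p.2
      rw [hG]
      simp only
      linarith
    have hWint : 0 ≤ ∫ p, ((‖p.1 - p.2‖^2 + 2*t*f p.1)
        - (G p.2 + (1 - 2*t*L) * ‖p.1 - S p.2‖^2)) ∂γ' := integral_nonneg hW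
    have i1 : Integrable (fun p : Em m × Em m => ‖p.1 - p.2‖^2) γ' := hint γ' hγ' _ hsq
    have i2 : Integrable (fun p : Em m × Em m => 2*t*f p.1) γ' :=
      hint γ' hγ' _ (continuous_const.mul (hf.continuous.comp continuous_fst))
    have i3 : Integrable (fun p : Em m × Em m => G p.2) γ' :=
      hint γ' hγ' _ (hGcont.comp continuous_snd)
    have i4 : Integrable (fun p : Em m × Em m => (1 - 2*t*L) * ‖p.1 - S p.2‖^2) γ' :=
      hint γ' hγ' _ (continuous_const.mul hqcont)
    have i12 : Integrable (fun p : Em m × Em m => ‖p.1 - p.2‖^2 + 2*t*f p.1) γ' :=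
      hint γ' hγ' _ (hsq.add (continuous_const.mul (hf.continuous.comp continuous_fst)))
    have i34 : Integrable
        (fun p : Em m × Em m => G p.2 + (1 - 2*t*L) * ‖p.1 - S p.2‖^2) γ' :=
      hint γ' hγ' _ ((hGcont.comp continuous_snd).add (continuous_const.mul hqcont))
    rw [integral_sub i12 i34, integral_add i1 i2, integral_add i3 i4,
      integral_const_mul, integral_const_mul] at hWint
    have e1 : ∫ p : Em m × Em m, f p.1 ∂γ' = ∫ x, f x ∂μ := by
      rw [← hγ'.1, integral_map measurable_fst.aemeasurable hf.continuous.aestronglyMeasurable]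
    have e2 : ∫ p : Em m × Em m, G p.2 ∂γ' = ∫ y, G y ∂ν := by
      rw [← hγ'.2, integral_map measurable_snd.aemeasurable hGcont.aestronglyMeasurable]
    rw [e1, e2] at hWint
    have hc2 : cost2 γ' = ∫ p : Em m × Em m, ‖p.1 - p.2‖^2 ∂γ' := rfl
    rw [hc2, hcost₀]
    linarith
  refine ⟨part1, ?_⟩
  apply Set.eq_singleton_iff_unique_mem.mpr
  constructor
  · show IsOptCoupling γ₀ μ ν
    refine ⟨hγ₀coup, ?_⟩
    intro γ' hγ'
    have h := hmain γ' hγ'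
    have hq0 : 0 ≤ ∫ p, ‖p.1 - S p.2‖^2 ∂γ' := integral_nonneg (fun p => by positivity)
    nlinarith [mul_nonneg (by linarith : (0:ℝ) ≤ 1 - 2*t*L) hq0]
  · intro γ hγmem
    obtain ⟨hγcoup, hγopt⟩ := hγmem
    haveI := hcoupprob γ hγcoup
    haveI : IsProbabilityMeasure γ₀ := hcoupprob γ₀ hγ₀coup
    have hle : cost2 γ ≤ cost2 γ₀ := hγopt γ₀ hγ₀coup
    have h := hmain γ hγcoup
    have hq0 : 0 ≤ ∫ p, ‖p.1 - S p.2‖^2 ∂γ := integral_nonneg (fun p => by positivity)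
    have hzero : ∫ p, ‖p.1 - S p.2‖^2 ∂γ = 0 := by
      nlinarith [mul_nonneg (by linarith : (0:ℝ) ≤ 1 - 2*t*L - 1/2) hq0]
    have haezero : (fun p : Em m × Em m => ‖p.1 - S p.2‖^2) =ᵐ[γ] 0 :=
      (integral_eq_zero_iff_of_nonneg (fun p => by positivity) (hint γ hγcoup _ hqcont)).mp hzero
    have hgraph : ∀ᵐ p ∂γ, p.2 = T p.1 := by
      filter_upwards [haezero] with p hp
      simp only [Pi.zero_apply] at hp
      have hn0 : ‖p.1 - S p.2‖ = 0 := by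
        nlinarith [norm_nonneg (p.1 - S p.2)]
      have h1 : p.1 = S p.2 := by
        rwa [norm_sub_eq_zero_iff] at hn0
      rw [h1, hTS]
    apply MeasureTheory.ext_of_generate_finite _ generateFrom_prod.symm isPiSystem_prod ?_ ?_
    · rintro s ⟨A, hA, B, hB, rfl⟩
      simp only [Set.mem_setOf_eq] at hA hB
      have hABm : MeasurableSet (A ∩ T ⁻¹' B) := hA.inter (hTmeas hB)
      have hγ₀AB : γ₀ (A ×ˢ B) = μ (A ∩ T ⁻¹' B) := by
        rw [hγ₀, Measure.map_apply himeas (hA.prod hB), hiT]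
        congr 1
      have hsetae : (A ×ˢ B : Set (Em m × Em m)) =ᵐ[γ] (Prod.fst ⁻¹' (A ∩ T ⁻¹' B)) := by
        filter_upwards [hgraph] with p hp
        rw [eq_iff_iff]
        show p ∈ A ×ˢ B ↔ p ∈ Prod.fst ⁻¹' (A ∩ T ⁻¹' B)
        rw [Set.mem_prod, Set.mem_preimage, Set.mem_inter_iff, Set.mem_preimage, hp]
      rw [measure_congr hsetae, hγ₀AB, ← hγcoup.1, Measure.map_apply measurable_fst hABm]
    · rw [measure_univ, measure_univ]
end
end

section
/- Let θ₀ : [0,∞) → [0,∞) be convex, nondecreasing and superlinear, let c₀ ∈ ℝ, and let L : ℝ^m × ℝ^m → ℝ be continuous with L(x,v) ≥ θ₀(|v|) − c₀ for all (x,v). For t > 0 define A_t(x,y) := inf { ∫₀ᵗ L(η(s), η'(s)) ds : η ∈ C¹([0,t]; ℝ^m), η(0)=x, η(t)=y } and C^t(μ,ν) := inf_{γ∈Γ(μ,ν)} ∫ A_t(x,y) dγ. Then for all μ, ν ∈ 𝒫_c(ℝ^m) and t > 0 one has C^t(μ,ν) ≥ t·θ₀(W₁(μ,ν)/t) − c₀·t;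 in particular, for every k ≥ 0, C^t(μ,ν) ≥ k·W₁(μ,ν) − (c₀ + θ₀*(k))·t, where θ₀*(k) := sup_{r≥0} (kr − θ₀(r)). Hence C^t(μ,·) and C^t(·,μ) are superlinear on 𝒫_c(ℝ^m) endowed with the W₁ metric. -/
open MeasureTheory Metric Set
open scoped RealInnerProductSpace ENNReal

noncomputable section

open Paper

namespace Paper

/-- The fundamental solution `A_t(x,y)`: infimum of the Lagrangian action over
`C¹` curves `η : [0,t] → ℝ^m` with `η(0) = x`, `η(t) = y`. -/
def actionA {m : ℕ} (L : Em m → Em m → ℝ) (t : ℝ) (x y : Em m) : ℝ :=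
  sInf {r : ℝ | ∃ η : ℝ → Em m, ContDiff ℝ 1 η ∧ η 0 = x ∧ η t = y ∧
    r = ∫ s in (0 : ℝ)..t, L (η s) (deriv η s)}

/-- The dynamical cost functional `C^t(μ,ν)` associated with the fundamental solution. -/
def Cdyn {m : ℕ} (L : Em m → Em m → ℝ) (t : ℝ) (μ ν : Measure (Em m)) : ℝ :=
  sInf {r : ℝ | ∃ γ : Measure (Em m × Em m), IsCoupling γ μ ν ∧
    r = ∫ p, actionA L t p.1 p.2 ∂γ}

/-- The Fenchel–Legendre transform of `θ₀` on `[0,∞)`. -/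
def legendre (θ : ℝ → ℝ) (k : ℝ) : ℝ :=
  sSup {v : ℝ | ∃ r ≥ (0 : ℝ), v = k * r - θ r}

end Paper



namespace Aux

open Paper

variable {m : ℕ}

/-- Supporting line for a convex monotone function on `[0,∞)`. -/
lemma supporting_line {θ : ℝ → ℝ} (hconv : ConvexOn ℝ (Set.Ici 0) θ)
    (hmono : MonotoneOn θ (Set.Ici 0)) {d : ℝ} (hd : 0 ≤ d) :
    ∃ k ≥ (0:ℝ), ∀ r, 0 ≤ r → θ d + k * (r - d) ≤ θ r := by
  rcases eq_or_lt_of_le hd with h0 | hd0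
  · refine ⟨0, le_rfl, fun r hr => ?_⟩
    have := hmono (le_refl (0:ℝ)) hr hr
    rw [← h0]; simpa using this
  · set S : Set ℝ := {v | ∃ r, 0 ≤ r ∧ r < d ∧ v = (θ d - θ r) / (d - r)} with hS
    have hne : S.Nonempty := ⟨(θ d - θ 0) / (d - 0), 0, le_rfl, hd0, rfl⟩
    have hbdd : BddAbove S := by
      refine ⟨(θ (d+1) - θ d) / (d + 1 - d), ?_⟩
      rintro v ⟨r, hr, hrd, rfl⟩
      exact hconv.slope_mono_adjacent hr (by simp; linarith : (d+1) ∈ Set.Ici (0:ℝ)) hrd (by linarith)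
    set k := sSup S with hk
    have hk0 : 0 ≤ k := by
      have h0S : (θ d - θ 0) / (d - 0) ∈ S := ⟨0, le_rfl, hd0, rfl⟩
      have : 0 ≤ (θ d - θ 0) / (d - 0) :=
        div_nonneg (by have := hmono (le_refl (0:ℝ)) hd hd0.le; linarith) (by linarith)
      exact this.trans (le_csSup hbdd h0S)
    refine ⟨k, hk0, fun r hr => ?_⟩
    rcases lt_trichotomy r d with hlt | heq | hgt
    · have hmem : (θ d - θ r) / (d - r) ∈ S := ⟨r, hr, hlt, rfl⟩
      have := le_csSup hbdd hmem
      have hpos : 0 < d - r := by linarith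
      rw [div_le_iff₀ hpos] at this
      nlinarith
    · subst heq; simp
    · have hub : ∀ v ∈ S, v ≤ (θ r - θ d) / (r - d) := by
        rintro v ⟨s, hs, hsd, rfl⟩
        exact hconv.slope_mono_adjacent hs (hd.trans hgt.le) hsd hgt
      have := csSup_le hne hub
      have hpos : 0 < r - d := by linarith
      rw [le_div_iff₀ hpos] at this
      nlinarith

section Action

variable (L : Em m → Em m → ℝ) {t : ℝ}

/-- The defining set of `actionA`. -/
def aset (t : ℝ) (x y : Em m) : Set ℝ :=
  {r : ℝ | ∃ η : ℝ → Em m, ContDiff ℝ 1 η ∧ η 0 = x ∧ η t = y ∧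
    r = ∫ s in (0 : ℝ)..t, L (η s) (deriv η s)}

lemma actionA_eq (t : ℝ) (x y : Em m) : actionA L t x y = sInf (aset L t x y) := rfl

/-- A curve that is the sum of a `C¹` curve and an affine map. -/
lemma curve_mem (η : ℝ → Em m) (hη : ContDiff ℝ 1 η) (a c : Em m) :
    ContDiff ℝ 1 (fun s : ℝ => η s + (a + s • c)) ∧
      (∀ s : ℝ, deriv (fun s : ℝ => η s + (a + s • c)) s = deriv η s + c) := by
  have hda : ∀ s : ℝ, HasDerivAt (fun s : ℝ => η s + (a + s • c)) (deriv η s + c) s := by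
    intro s
    have h1 : HasDerivAt (fun s : ℝ => s • c) ((1:ℝ) • c) s := (hasDerivAt_id s).smul_const c
    have h2 : HasDerivAt (fun s : ℝ => a + s • c) c s := by
      simpa using h1.const_add a
    exact ((hη.differentiable one_ne_zero s).hasDerivAt).add h2
  refine ⟨hη.add (contDiff_const.add (contDiff_id.smul contDiff_const)), fun s => (hda s).deriv⟩

/-- Membership of the straight-line curve. -/
lemma straight_mem (ht : t ≠ 0) (x y : Em m) :
    (∫ s in (0:ℝ)..t, L (x + s • (t⁻¹ • (y - x))) (t⁻¹ • (y - x))) ∈ aset L t x y := by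
  set c := t⁻¹ • (y - x) with hc
  have hda : ∀ s : ℝ, HasDerivAt (fun s : ℝ => x + s • c) c s := fun s => by
    simpa using ((hasDerivAt_id s).smul_const c).const_add x
  refine ⟨fun s => x + s • c, contDiff_const.add (contDiff_id.smul contDiff_const), by simp, ?_, ?_⟩
  · simp [hc, smul_smul, mul_inv_cancel₀ ht]
  · simp only [show ∀ s : ℝ, deriv (fun s : ℝ => x + s • c) s = c from fun s => (hda s).deriv]

variable {L}

/-- Lower bound for every element of the action set via a supporting line of `θ`. -/
lemma element_lb {θ : ℝ → ℝ} {c₀ : ℝ}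
    (hLb : ∀ x v : Em m, θ ‖v‖ - c₀ ≤ L x v)
    (hL : Continuous fun p : Em m × Em m => L p.1 p.2)
    (ht : 0 < t) {D k : ℝ} (hk : 0 ≤ k)
    (hsupp : ∀ r, 0 ≤ r → θ D + k * (r - D) ≤ θ r)
    (x y : Em m) {r : ℝ} (hr : r ∈ aset L t x y) :
    t * θ D + k * (‖x - y‖ - t * D) - c₀ * t ≤ r := by
  obtain ⟨η, hη, h0, ht', rfl⟩ := hr
  have hdc : Continuous (deriv η) := hη.continuous_deriv le_rfl
  have hLc : Continuous fun s : ℝ => L (η s) (deriv η s) :=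
    hL.comp ((hη.continuous).prodMk hdc)
  have hnc : Continuous fun s : ℝ => (θ D - k * D - c₀) + k * ‖deriv η s‖ :=
    continuous_const.add (continuous_const.mul hdc.norm)
  have step1 : (∫ s in (0:ℝ)..t, ((θ D - k * D - c₀) + k * ‖deriv η s‖))
      ≤ ∫ s in (0:ℝ)..t, L (η s) (deriv η s) := by
    refine intervalIntegral.integral_mono_on ht.le (hnc.intervalIntegrable _ _)
      (hLc.intervalIntegrable _ _) (fun s _ => ?_)
    have h1 := hsupp ‖deriv η s‖ (norm_nonneg _)
    have h2 := hLb (η s) (deriv η s)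
    nlinarith
  have step2 : (∫ s in (0:ℝ)..t, ((θ D - k * D - c₀) + k * ‖deriv η s‖))
      = (θ D - k * D - c₀) * t + k * ∫ s in (0:ℝ)..t, ‖deriv η s‖ := by
    rw [intervalIntegral.integral_add (intervalIntegrable_const)
      (((hdc.norm).intervalIntegrable _ _).const_mul k),
      intervalIntegral.integral_const, intervalIntegral.integral_const_mul]
    simp [mul_comm]
  have hsub : (∫ s in (0:ℝ)..t, deriv η s) = η t - η 0 :=
    intervalIntegral.integral_deriv_eq_sub (fun s _ => hη.differentiable one_ne_zero s)
      (hdc.intervalIntegrable _ _)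
  have step3 : ‖x - y‖ ≤ ∫ s in (0:ℝ)..t, ‖deriv η s‖ := by
    calc ‖x - y‖ = ‖(∫ s in (0:ℝ)..t, deriv η s)‖ := by
          rw [hsub, h0, ht', norm_sub_rev]
      _ ≤ ∫ s in (0:ℝ)..t, ‖deriv η s‖ :=
          intervalIntegral.norm_integral_le_integral_norm ht.le
  nlinarith [mul_le_mul_of_nonneg_left step3 hk]

lemma aset_nonempty (ht : t ≠ 0) (x y : Em m) : (aset L t x y).Nonempty :=
  ⟨_, straight_mem L ht x y⟩

lemma aset_bddBelow {θ : ℝ → ℝ} {c₀ : ℝ}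
    (hLb : ∀ x v : Em m, θ ‖v‖ - c₀ ≤ L x v)
    (hL : Continuous fun p : Em m × Em m => L p.1 p.2)
    (hmono : MonotoneOn θ (Set.Ici 0)) (ht : 0 < t) (x y : Em m) :
    BddBelow (aset L t x y) := by
  refine ⟨t * θ 0 + 0 * (‖x - y‖ - t * 0) - c₀ * t, fun r hr => ?_⟩
  refine element_lb hLb hL ht le_rfl (fun r hr => ?_) x y hr
  have := hmono (le_refl (0:ℝ)) hr hr
  nlinarith

/-- Lower bound for `actionA` via a supporting line of `θ`. -/
lemma actionA_lb {θ : ℝ → ℝ} {c₀ : ℝ}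
    (hLb : ∀ x v : Em m, θ ‖v‖ - c₀ ≤ L x v)
    (hL : Continuous fun p : Em m × Em m => L p.1 p.2)
    (ht : 0 < t) {D k : ℝ} (hk : 0 ≤ k)
    (hsupp : ∀ r, 0 ≤ r → θ D + k * (r - D) ≤ θ r)
    (x y : Em m) :
    t * θ D + k * (‖x - y‖ - t * D) - c₀ * t ≤ actionA L t x y :=
  le_csInf (aset_nonempty ht.ne' x y) (fun r hr => element_lb hLb hL ht hk hsupp x y hr)

/-- Upper semicontinuity of `actionA` in `(x, y)`. -/
lemma actionA_usc {θ : ℝ → ℝ} {c₀ : ℝ}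
    (hLb : ∀ x v : Em m, θ ‖v‖ - c₀ ≤ L x v)
    (hL : Continuous fun p : Em m × Em m => L p.1 p.2)
    (hmono : MonotoneOn θ (Set.Ici 0)) (ht : 0 < t) :
    UpperSemicontinuous (fun p : Em m × Em m => actionA L t p.1 p.2) := by
  intro p y hy
  obtain ⟨r, hrmem, hry⟩ :=
    exists_lt_of_csInf_lt (aset_nonempty ht.ne' p.1 p.2) hy
  obtain ⟨η, hη, h0, ht', rfl⟩ := hrmem
  have hdc : Continuous (deriv η) := hη.continuous_deriv le_rfl
  set F : Em m × Em m → ℝ → ℝ := fun q s =>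
    L (η s + (q.1 + s • (t⁻¹ • (q.2 - q.1)))) (deriv η s + t⁻¹ • (q.2 - q.1)) with hF
  have hFc : Continuous (Function.uncurry F) := by
    show Continuous fun z : (Em m × Em m) × ℝ =>
      L (η z.2 + (z.1.1 + z.2 • (t⁻¹ • (z.1.2 - z.1.1)))) (deriv η z.2 + t⁻¹ • (z.1.2 - z.1.1))
    have c1 : Continuous fun z : (Em m × Em m) × ℝ =>
        η z.2 + (z.1.1 + z.2 • (t⁻¹ • (z.1.2 - z.1.1))) :=
      (hη.continuous.comp continuous_snd).add
        ((continuous_fst.fst).add (continuous_snd.smul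
          (by fun_prop : Continuous fun z : (Em m × Em m) × ℝ => t⁻¹ • (z.1.2 - z.1.1))))
    have c2 : Continuous fun z : (Em m × Em m) × ℝ =>
        deriv η z.2 + t⁻¹ • (z.1.2 - z.1.1) :=
      (hdc.comp continuous_snd).add
        (by fun_prop : Continuous fun z : (Em m × Em m) × ℝ => t⁻¹ • (z.1.2 - z.1.1))
    exact hL.comp (c1.prodMk c2)
  set Φ : Em m × Em m → ℝ := fun q => ∫ s in (0:ℝ)..t, F q s with hΦ
  have hΦc : Continuous Φ :=
    intervalIntegral.continuous_parametric_intervalIntegral_of_continuous' hFc 0 t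
  have hΨc : ContinuousAt (fun q : Em m × Em m => Φ (q.1 - p.1, q.2 - p.2)) p :=
    (hΦc.comp ((continuous_fst.sub continuous_const).prodMk
      (continuous_snd.sub continuous_const))).continuousAt
  have hval : Φ (p.1 - p.1, p.2 - p.2) = ∫ s in (0:ℝ)..t, L (η s) (deriv η s) := by
    simp [hΦ, hF]
  have hev : ∀ᶠ q in nhds p, Φ (q.1 - p.1, q.2 - p.2) < y := by
    have : ContinuousAt (fun q : Em m × Em m => Φ (q.1 - p.1, q.2 - p.2)) p := hΨc
    have hlt : Φ (p.1 - p.1, p.2 - p.2) < y := by rw [hval]; exact hry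
    exact this.eventually_lt continuousAt_const hlt
  filter_upwards [hev] with q hq
  refine lt_of_le_of_lt ?_ hq
  refine csInf_le (aset_bddBelow hLb hL hmono ht q.1 q.2) ?_
  obtain ⟨hC, hd⟩ := curve_mem η hη (q.1 - p.1) (t⁻¹ • ((q.2 - p.2) - (q.1 - p.1)))
  refine ⟨_, hC, ?_, ?_, ?_⟩
  · simp [h0]
  · rw [ht']
    rw [smul_smul, mul_inv_cancel₀ ht.ne', one_smul]
    abel
  · simp only [hd]
    rfl

end Action

lemma coupling_prob {γ : Measure (Em m × Em m)} {μ ν : Measure (Em m)}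
    [IsProbabilityMeasure μ] (hγ : IsCoupling γ μ ν) : IsProbabilityMeasure γ := by
  constructor
  have h := congrArg (fun ρ : Measure (Em m) => ρ Set.univ) hγ.1
  simp only [Measure.map_apply measurable_fst MeasurableSet.univ, Set.preimage_univ] at h
  rw [h]; exact measure_univ

lemma coupling_conc {γ : Measure (Em m × Em m)} {μ ν : Measure (Em m)}
    (hγ : IsCoupling γ μ ν) {K K' : Set (Em m)} (hK : IsCompact K) (hK' : IsCompact K')
    (hμK : μ Kᶜ = 0) (hνK : ν K'ᶜ = 0) : γ ((K ×ˢ K')ᶜ) = 0 := by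
  have h1 : γ (Prod.fst ⁻¹' Kᶜ) = 0 := by
    rw [← Measure.map_apply measurable_fst hK.isClosed.measurableSet.compl, hγ.1]; exact hμK
  have h2 : γ (Prod.snd ⁻¹' K'ᶜ) = 0 := by
    rw [← Measure.map_apply measurable_snd hK'.isClosed.measurableSet.compl, hγ.2]; exact hνK
  refine measure_mono_null (fun p hp => ?_) (measure_union_null h1 h2)
  simp only [Set.mem_compl_iff, Set.mem_prod, not_and_or] at hp
  rcases hp with h | h
  · exact Or.inl h
  · exact Or.inr h

end Aux

theorem statement8' {m : ℕ} (θ : ℝ → ℝ) (hconv : ConvexOn ℝ (Ici (0 : ℝ)) θ)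
    (hmono : MonotoneOn θ (Ici (0 : ℝ))) (hnn : ∀ r : ℝ, 0 ≤ r → 0 ≤ θ r)
    (hsl : Filter.Tendsto (fun r : ℝ => θ r / r) Filter.atTop Filter.atTop)
    (c₀ : ℝ) (L : Em m → Em m → ℝ)
    (hL : Continuous fun p : Em m × Em m => L p.1 p.2)
    (hLb : ∀ x v : Em m, θ ‖v‖ - c₀ ≤ L x v)
    (μ ν : Measure (Em m)) [IsProbabilityMeasure μ] [IsProbabilityMeasure ν]
    (hμ : IsCptSupp μ) (hν : IsCptSupp ν) (t : ℝ) (ht : 0 < t) :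
    t * θ (W1 μ ν / t) - c₀ * t ≤ Cdyn L t μ ν ∧
    ∀ k ≥ (0 : ℝ), k * W1 μ ν - (c₀ + legendre θ k) * t ≤ Cdyn L t μ ν := by
  obtain ⟨K, hK, hμK⟩ := hμ
  obtain ⟨K', hK', hνK⟩ := hν
  have hW1nn : 0 ≤ W1 μ ν := by
    apply Real.sInf_nonneg
    rintro r ⟨γ, hγ, rfl⟩
    exact integral_nonneg fun p => norm_nonneg _
  set D := W1 μ ν / t with hD
  have hDnn : 0 ≤ D := div_nonneg hW1nn ht.le
  have hDt : t * D = W1 μ ν := by rw [hD]; field_simp [ht.ne']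
  obtain ⟨k₀, hk₀, hsupp⟩ := Aux.supporting_line hconv hmono hDnn
  have hprod : IsCoupling (μ.prod ν) μ ν := by
    constructor
    · simp [Measure.map_fst_prod]
    · simp [Measure.map_snd_prod]
  have key : t * θ D - c₀ * t ≤ Cdyn L t μ ν := by
    refine le_csInf ⟨_, μ.prod ν, hprod, rfl⟩ ?_
    rintro r ⟨γ, hγ, rfl⟩
    haveI hγp : IsProbabilityMeasure γ := Aux.coupling_prob hγ
    have hconc : γ ((K ×ˢ K')ᶜ) = 0 := Aux.coupling_conc hγ hK hK' hμK hνK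
    have haep : ∀ᵐ p ∂γ, p ∈ K ×ˢ K' := by
      rw [MeasureTheory.ae_iff]
      rw [show {a : Em m × Em m | ¬ a ∈ K ×ˢ K'} = (K ×ˢ K')ᶜ from rfl]
      exact hconc
    have hmeas : AEStronglyMeasurable (fun p : Em m × Em m => actionA L t p.1 p.2) γ :=
      (Aux.actionA_usc hLb hL hmono ht).measurable.aestronglyMeasurable
    set g : Em m × Em m → ℝ := fun p =>
      ∫ s in (0:ℝ)..t, L (p.1 + s • (t⁻¹ • (p.2 - p.1))) (t⁻¹ • (p.2 - p.1)) with hg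
    have hgc : Continuous g := by
      apply intervalIntegral.continuous_parametric_intervalIntegral_of_continuous'
        (f := fun (p : Em m × Em m) (s : ℝ) =>
          L (p.1 + s • (t⁻¹ • (p.2 - p.1))) (t⁻¹ • (p.2 - p.1)))
      have c1 : Continuous fun z : (Em m × Em m) × ℝ =>
          z.1.1 + z.2 • (t⁻¹ • (z.1.2 - z.1.1)) :=
        (continuous_fst.fst).add (continuous_snd.smul
          (by fun_prop : Continuous fun z : (Em m × Em m) × ℝ => t⁻¹ • (z.1.2 - z.1.1)))
      have c2 : Continuous fun z : (Em m × Em m) × ℝ =>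
          t⁻¹ • (z.1.2 - z.1.1) :=
        by fun_prop
      exact hL.comp (c1.prodMk c2)
    have hfg : ∀ p : Em m × Em m, actionA L t p.1 p.2 ≤ g p := fun p =>
      csInf_le (Aux.aset_bddBelow hLb hL hmono ht _ _) (Aux.straight_mem L ht.ne' p.1 p.2)
    obtain ⟨Cg, hCg⟩ := (hK.prod hK').exists_bound_of_continuousOn hgc.continuousOn
    have hflb : ∀ p : Em m × Em m,
        t * θ D + k₀ * (‖p.1 - p.2‖ - t * D) - c₀ * t ≤ actionA L t p.1 p.2 :=
      fun p => Aux.actionA_lb hLb hL ht hk₀ hsupp p.1 p.2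
    have hnint : Integrable (fun p : Em m × Em m => ‖p.1 - p.2‖) γ := by
      obtain ⟨Cn, hCn⟩ := (hK.prod hK').exists_bound_of_continuousOn
        (continuous_fst.sub continuous_snd).norm.continuousOn
      refine Integrable.mono' (integrable_const Cn)
        ((continuous_fst.sub continuous_snd).norm.aestronglyMeasurable) ?_
      filter_upwards [haep] with p hp
      exact hCn p hp
    have hfint : Integrable (fun p : Em m × Em m => actionA L t p.1 p.2) γ := by
      set A := t * θ D - k₀ * (t * D) - c₀ * t with hA
      refine Integrable.mono' (integrable_const (max |A| Cg)) hmeas ?_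
      filter_upwards [haep] with p hp
      have h1 := hflb p
      have h2 := hfg p
      have h3 := hCg p hp
      have h4 : g p ≤ Cg := (le_abs_self _).trans (by rwa [Real.norm_eq_abs] at h3)
      have h5 : (0:ℝ) ≤ k₀ * ‖p.1 - p.2‖ := mul_nonneg hk₀ (norm_nonneg _)
      rw [Real.norm_eq_abs, abs_le]
      constructor
      · have := neg_abs_le A
        have := le_max_left |A| Cg
        nlinarith
      · exact (h2.trans h4).trans (le_max_right _ _)
    have hlow : ∀ p : Em m × Em m,
        (t * θ D - k₀ * (t * D) - c₀ * t) + k₀ * ‖p.1 - p.2‖ ≤ actionA L t p.1 p.2 := by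
      intro p; have := hflb p; nlinarith
    have hmono_int :
        (∫ p, ((t * θ D - k₀ * (t * D) - c₀ * t) + k₀ * ‖p.1 - p.2‖) ∂γ)
          ≤ ∫ p, actionA L t p.1 p.2 ∂γ :=
      integral_mono ((integrable_const _).add (hnint.const_mul k₀)) hfint hlow
    have hcomp : (∫ p, ((t * θ D - k₀ * (t * D) - c₀ * t) + k₀ * ‖p.1 - p.2‖) ∂γ)
        = (t * θ D - k₀ * (t * D) - c₀ * t) + k₀ * ∫ p, ‖p.1 - p.2‖ ∂γ := by
      rw [integral_add (integrable_const _) (hnint.const_mul k₀), integral_const,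
        MeasureTheory.integral_const_mul]
      simp
    have hge : W1 μ ν ≤ ∫ p, ‖p.1 - p.2‖ ∂γ := by
      refine csInf_le ⟨0, ?_⟩ ⟨γ, hγ, rfl⟩
      rintro s ⟨γ', hγ', rfl⟩
      exact integral_nonneg fun p => norm_nonneg _
    rw [hcomp] at hmono_int
    nlinarith [mul_le_mul_of_nonneg_left hge hk₀]
  refine ⟨key, fun k hk => ?_⟩
  have hBdd : BddAbove {v : ℝ | ∃ r ≥ (0:ℝ), v = k * r - θ r} := by
    obtain ⟨R, hR⟩ := Filter.eventually_atTop.1 (hsl.eventually_ge_atTop k)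
    refine ⟨k * max R 1, ?_⟩
    rintro v ⟨r, hr, rfl⟩
    rcases le_or_gt r (max R 1) with h | h
    · have h0 := hnn r hr
      nlinarith [mul_le_mul_of_nonneg_left h hk]
    · have hrpos : (0:ℝ) < r := lt_of_lt_of_le one_pos ((le_max_right R 1).trans h.le)
      have h1 : k ≤ θ r / r := hR r ((le_max_left R 1).trans h.le)
      have h2 : k * r ≤ θ r := by
        rw [le_div_iff₀ hrpos] at h1; linarith
      have h3 : 0 ≤ k * max R 1 := mul_nonneg hk (by positivity)
      linarith
  have hleg : k * D - θ D ≤ legendre θ k := le_csSup hBdd ⟨D, hDnn, rfl⟩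
  have hW1D : k * W1 μ ν = k * D * t := by rw [← hDt]; ring
  nlinarith [mul_le_mul_of_nonneg_right hleg ht.le]


/-- part (1) of Theorem `thm:dyn-cost`: superlinearity of the dynamical
cost: `C^t(μ,ν) ≥ t·θ₀(W₁(μ,ν)/t) − c₀·t`, and hence `C^t(μ,ν) ≥ k·W₁(μ,ν) − (c₀+θ₀*(k))·t`
for every `k ≥ 0`, so `C^t(μ,·)` and `C^t(·,μ)` are superlinear for the `W₁` metric. -/
theorem statement8 {m : ℕ} (θ : ℝ → ℝ) (hconv : ConvexOn ℝ (Ici (0 : ℝ)) θ)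
    (hmono : MonotoneOn θ (Ici (0 : ℝ))) (hnn : ∀ r : ℝ, 0 ≤ r → 0 ≤ θ r)
    (hsl : Filter.Tendsto (fun r : ℝ => θ r / r) Filter.atTop Filter.atTop)
    (c₀ : ℝ) (L : Em m → Em m → ℝ)
    (hL : Continuous fun p : Em m × Em m => L p.1 p.2)
    (hLb : ∀ x v : Em m, θ ‖v‖ - c₀ ≤ L x v)
    (μ ν : Measure (Em m)) [IsProbabilityMeasure μ] [IsProbabilityMeasure ν]
    (hμ : IsCptSupp μ) (hν : IsCptSupp ν) (t : ℝ) (ht : 0 < t) :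
    t * θ (W1 μ ν / t) - c₀ * t ≤ Cdyn L t μ ν ∧
    ∀ k ≥ (0 : ℝ), k * W1 μ ν - (c₀ + legendre θ k) * t ≤ Cdyn L t μ ν := by
  exact statement8' θ hconv hmono hnn hsl c₀ L hL hLb μ ν hμ hν t ht
end
end

section
/- Let K ⊂ ℝ^m be compact, let 0 < a < b, l > 0, and let (c_t)_{t∈[a,b]} be a family of continuous cost functions c_t : ℝ^m × ℝ^m → ℝ such that |c_{t₁}(x,y₁) − c_{t₂}(x,y₂)| ≤ l·(|y₁−y₂| + |t₁−t₂|) for all x, y₁, y₂ ∈ K and t₁, t₂ ∈ [a,b]. Define C^t(μ,ν) := inf_{γ∈Γ(μ,ν)} ∫ c_t(x,y) dγ. Then for every μ, ν₁, ν₂ ∈ 𝒫(K) and t₁, t₂ ∈ [a,b]: |C^{t₁}(μ,ν₁) − C^{t₂}(μ,ν₂)| ≤ l·(W₁(ν₁,ν₂) + |t₁−t₂|). In particular, (t,ν) ↦ C^t(μ,ν) is Lipschitz on [a,b] × 𝒫(K). -/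
open MeasureTheory Metric Set
open scoped RealInnerProductSpace ENNReal

noncomputable section

open Paper

namespace Paper

/-- The transport cost functional `C(μ,ν) = inf_{γ ∈ Γ(μ,ν)} ∫ c dγ`. -/
def Ccost {m : ℕ} (c : Em m → Em m → ℝ) (μ ν : Measure (Em m)) : ℝ :=
  sInf {r : ℝ | ∃ γ : Measure (Em m × Em m), IsCoupling γ μ ν ∧
    r = ∫ p, c p.1 p.2 ∂γ}

end Paper

namespace Paper

open ProbabilityTheory

variable {m : ℕ}

lemma isProb_of_coupling {γ : Measure (Em m × Em m)} {μ ν : Measure (Em m)}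
    [IsProbabilityMeasure μ] (h : IsCoupling γ μ ν) : IsProbabilityMeasure γ := by
  constructor
  have h2 : γ.map Prod.fst Set.univ = 1 := by rw [h.1]; exact measure_univ
  rwa [Measure.map_apply measurable_fst MeasurableSet.univ, Set.preimage_univ] at h2

lemma coupling_ae_mem {γ : Measure (Em m × Em m)} {μ ν : Measure (Em m)} {K : Set (Em m)}
    (hKm : MeasurableSet K) (h : IsCoupling γ μ ν) (hμ : μ Kᶜ = 0) (hν : ν Kᶜ = 0) :
    ∀ᵐ p ∂γ, p.1 ∈ K ∧ p.2 ∈ K := by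
  have h1 : γ (Prod.fst ⁻¹' Kᶜ) = 0 := by
    rw [← Measure.map_apply measurable_fst hKm.compl, h.1]; exact hμ
  have h2 : γ (Prod.snd ⁻¹' Kᶜ) = 0 := by
    rw [← Measure.map_apply measurable_snd hKm.compl, h.2]; exact hν
  rw [ae_iff]
  refine measure_mono_null (fun p hp => ?_) (measure_union_null h1 h2)
  simp only [Set.mem_setOf_eq, not_and_or] at hp
  rcases hp with h | h
  · exact Set.mem_union_left _ h
  · exact Set.mem_union_right _ h

lemma coupling_prod (μ ν : Measure (Em m)) [IsProbabilityMeasure μ] [IsProbabilityMeasure ν] :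
    IsCoupling (μ.prod ν) μ ν := by
  constructor
  · rw [Measure.map_fst_prod]; simp
  · rw [Measure.map_snd_prod]; simp

lemma ccost_bddBelow {K : Set (Em m)} (hK : IsCompact K) {f : Em m → Em m → ℝ}
    (hf : Continuous fun p : Em m × Em m => f p.1 p.2)
    {μ ν : Measure (Em m)} [IsProbabilityMeasure μ] [IsProbabilityMeasure ν]
    (hμ : μ Kᶜ = 0) (hν : ν Kᶜ = 0) :
    BddBelow {r : ℝ | ∃ γ : Measure (Em m × Em m), IsCoupling γ μ ν ∧
      r = ∫ p, f p.1 p.2 ∂γ} := by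
  obtain ⟨C, hC⟩ := (hK.prod hK).exists_bound_of_continuousOn hf.continuousOn
  refine ⟨-(max C 0), ?_⟩
  rintro r ⟨γ, hγ, rfl⟩
  haveI := isProb_of_coupling hγ
  have hmem := coupling_ae_mem hK.isClosed.measurableSet hγ hμ hν
  by_cases hint : Integrable (fun p : Em m × Em m => f p.1 p.2) γ
  · have hb : ∀ᵐ p ∂γ, -(max C 0) ≤ f p.1 p.2 := by
      filter_upwards [hmem] with p hp
      have h1 : ‖f p.1 p.2‖ ≤ C := hC (p.1, p.2) (Set.mk_mem_prod hp.1 hp.2)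
      have h2 := abs_le.mp ((Real.norm_eq_abs _ ▸ h1).trans (le_max_left C 0))
      linarith [h2.1]
    calc -(max C 0) = ∫ _, -(max C 0) ∂γ := by simp
    _ ≤ _ := integral_mono_ae (integrable_const _) hint hb
  · rw [integral_undef hint]
    exact neg_nonpos.mpr (le_max_right C 0)

lemma glue_estimate {K : Set (Em m)} (hK : IsCompact K)
    {c₁ c₂ : Em m → Em m → ℝ}
    (hc₁ : Continuous fun p : Em m × Em m => c₁ p.1 p.2)
    (hc₂ : Continuous fun p : Em m × Em m => c₂ p.1 p.2)
    {l s : ℝ}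
    (hlip : ∀ x ∈ K, ∀ y ∈ K, ∀ z ∈ K, c₂ x z ≤ c₁ x y + l * (‖y - z‖ + s))
    {μ ν₁ ν₂ : Measure (Em m)} [IsProbabilityMeasure μ] [IsProbabilityMeasure ν₁]
    [IsProbabilityMeasure ν₂] (hμ : μ Kᶜ = 0) (hν₁ : ν₁ Kᶜ = 0) (hν₂ : ν₂ Kᶜ = 0)
    {γ η : Measure (Em m × Em m)} (hγ : IsCoupling γ μ ν₁) (hη : IsCoupling η ν₁ ν₂) :
    Ccost c₂ μ ν₂ ≤ (∫ p, c₁ p.1 p.2 ∂γ) + l * ((∫ p, ‖p.1 - p.2‖ ∂η) + s) := by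
  haveI : OpensMeasurableSpace ((Em m × Em m) × Em m) := by infer_instance
  haveI hγP : IsProbabilityMeasure γ := isProb_of_coupling hγ
  haveI hηP : IsProbabilityMeasure η := isProb_of_coupling hη
  set κ : Kernel (Em m) (Em m) := η.condKernel with hκ
  set κ' : Kernel (Em m × Em m) (Em m) := κ.comap Prod.snd measurable_snd with hκ'
  set σ : Measure ((Em m × Em m) × Em m) := γ ⊗ₘ κ' with hσ
  have hfstη : η.fst = ν₁ := hη.1
  have hdis : ν₁ ⊗ₘ κ = η := by rw [← hfstη]; exact η.disintegrate κ
  have hA : σ.map Prod.fst = γ := Measure.fst_compProd γ κ'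
  have hmB : Measurable fun p : (Em m × Em m) × Em m => (p.1.2, p.2) :=
    measurable_fst.snd.prodMk measurable_snd
  have hB : σ.map (fun p => (p.1.2, p.2)) = η := by
    ext t ht
    rw [Measure.map_apply hmB ht, hσ, Measure.compProd_apply (hmB ht)]
    have hint : ∀ q : Em m × Em m,
        κ' q (Prod.mk q ⁻¹' ((fun p : (Em m × Em m) × Em m => (p.1.2, p.2)) ⁻¹' t))
          = κ q.2 (Prod.mk q.2 ⁻¹' t) := by
      intro q; rw [hκ', Kernel.comap_apply]; rfl
    rw [lintegral_congr hint,
      ← lintegral_map (Kernel.measurable_kernel_prodMk_left ht) measurable_snd, hγ.2,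
      ← hfstη, ← Measure.compProd_apply ht, hfstη, hdis]
  have hm2 : Measurable fun p : (Em m × Em m) × Em m => (p.1.1, p.2) :=
    measurable_fst.fst.prodMk measurable_snd
  have hγ₂ : IsCoupling (σ.map fun p => (p.1.1, p.2)) μ ν₂ := by
    constructor
    · rw [Measure.map_map measurable_fst hm2]
      have he : (Prod.fst ∘ fun p : (Em m × Em m) × Em m => (p.1.1, p.2))
          = Prod.fst ∘ (Prod.fst : (Em m × Em m) × Em m → Em m × Em m) := rfl
      rw [he, ← Measure.map_map measurable_fst measurable_fst, hA, hγ.1]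
    · rw [Measure.map_map measurable_snd hm2]
      have he : (Prod.snd ∘ fun p : (Em m × Em m) × Em m => (p.1.1, p.2))
          = Prod.snd ∘ (fun p : (Em m × Em m) × Em m => (p.1.2, p.2)) := rfl
      rw [he, ← Measure.map_map measurable_snd hmB, hB, hη.2]
  -- a.e. membership in K
  have hKm : MeasurableSet K := hK.isClosed.measurableSet
  have haeγ : ∀ᵐ q ∂γ, q.1 ∈ K ∧ q.2 ∈ K := coupling_ae_mem hKm hγ hμ hν₁
  have haeη2 : ∀ᵐ q ∂η, q.2 ∈ K := (coupling_ae_mem hKm hη hν₁ hν₂).mono fun q h => h.2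
  have hae1 : ∀ᵐ p ∂σ, p.1.1 ∈ K ∧ p.1.2 ∈ K := by
    rw [← hA] at haeγ
    exact (ae_map_iff measurable_fst.aemeasurable
      ((hKm.preimage measurable_fst).inter (hKm.preimage measurable_snd))).mp haeγ
  have hae2 : ∀ᵐ p ∂σ, p.2 ∈ K := by
    rw [← hB] at haeη2
    exact (ae_map_iff hmB.aemeasurable (hKm.preimage measurable_snd)).mp haeη2
  have haeσ : ∀ᵐ p ∂σ, p.1.1 ∈ K ∧ p.1.2 ∈ K ∧ p.2 ∈ K := by
    filter_upwards [hae1, hae2] with p h1 h2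
    exact ⟨h1.1, h1.2, h2⟩
  -- bounds and integrability
  obtain ⟨C₁, hC₁⟩ := (hK.prod hK).exists_bound_of_continuousOn hc₁.continuousOn
  obtain ⟨C₂, hC₂⟩ := (hK.prod hK).exists_bound_of_continuousOn hc₂.continuousOn
  obtain ⟨r, hr⟩ := hK.isBounded.subset_closedBall 0
  have hf₁ : Integrable (fun p : (Em m × Em m) × Em m => c₁ p.1.1 p.1.2) σ := by
    refine ⟨(hc₁.comp (continuous_fst.fst.prodMk continuous_fst.snd)).aestronglyMeasurable,
      HasFiniteIntegral.of_bounded (C := C₁) ?_⟩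
    filter_upwards [hae1] with p hp
    exact hC₁ (p.1.1, p.1.2) (Set.mk_mem_prod hp.1 hp.2)
  have hf₂ : Integrable (fun p : (Em m × Em m) × Em m => c₂ p.1.1 p.2) σ := by
    refine ⟨(hc₂.comp (continuous_fst.fst.prodMk continuous_snd)).aestronglyMeasurable,
      HasFiniteIntegral.of_bounded (C := C₂) ?_⟩
    filter_upwards [haeσ] with p hp
    exact hC₂ (p.1.1, p.2) (Set.mk_mem_prod hp.1 hp.2.2)
  have hf₃ : Integrable (fun p : (Em m × Em m) × Em m => ‖p.1.2 - p.2‖) σ := by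
    refine ⟨(continuous_fst.snd.sub continuous_snd).norm.aestronglyMeasurable,
      HasFiniteIntegral.of_bounded (C := r + r) ?_⟩
    filter_upwards [haeσ] with p hp
    have h1 : ‖p.1.2‖ ≤ r := mem_closedBall_zero_iff.mp (hr hp.2.1)
    have h2 : ‖p.2‖ ≤ r := mem_closedBall_zero_iff.mp (hr hp.2.2)
    calc ‖‖p.1.2 - p.2‖‖ = ‖p.1.2 - p.2‖ := norm_norm _
    _ ≤ ‖p.1.2‖ + ‖p.2‖ := norm_sub_le _ _
    _ ≤ r + r := add_le_add h1 h2
  have hg : Integrable (fun p : (Em m × Em m) × Em m => l * (‖p.1.2 - p.2‖ + s)) σ := by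
    have h := (hf₃.add (integrable_const s)).const_mul l
    exact h
  have hRHSint : Integrable
      (fun p : (Em m × Em m) × Em m => c₁ p.1.1 p.1.2 + l * (‖p.1.2 - p.2‖ + s)) σ := by
    have h := hf₁.add hg
    exact h
  have hmono : (∫ p, c₂ p.1.1 p.2 ∂σ)
      ≤ ∫ p, (c₁ p.1.1 p.1.2 + l * (‖p.1.2 - p.2‖ + s)) ∂σ := by
    refine integral_mono_ae hf₂ hRHSint ?_
    filter_upwards [haeσ] with p hp
    exact hlip _ hp.1 _ hp.2.1 _ hp.2.2
  have hsum : (∫ p, (c₁ p.1.1 p.1.2 + l * (‖p.1.2 - p.2‖ + s)) ∂σ)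
      = (∫ p, c₁ p.1.1 p.1.2 ∂σ) + l * ((∫ p, ‖p.1.2 - p.2‖ ∂σ) + s) := by
    have h4 : Integrable (fun p : (Em m × Em m) × Em m => ‖p.1.2 - p.2‖ + s) σ := by
      have h := hf₃.add (integrable_const s)
      exact h
    rw [integral_add hf₁ hg, integral_const_mul, integral_add hf₃ (integrable_const s),
      integral_const]
    simp
  have hi₁ : (∫ p, c₁ p.1.1 p.1.2 ∂σ) = ∫ p, c₁ p.1 p.2 ∂γ := by
    conv_rhs => rw [← hA,
      integral_map measurable_fst.aemeasurable hc₁.aestronglyMeasurable]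
  have hi₂ : (∫ p, c₂ p.1 p.2 ∂(σ.map fun p => (p.1.1, p.2)))
      = ∫ p, c₂ p.1.1 p.2 ∂σ :=
    integral_map hm2.aemeasurable hc₂.aestronglyMeasurable
  have hi₃ : (∫ p, ‖p.1.2 - p.2‖ ∂σ) = ∫ p, ‖p.1 - p.2‖ ∂η := by
    conv_rhs => rw [← hB,
      integral_map hmB.aemeasurable (f := fun p : Em m × Em m => ‖p.1 - p.2‖)
        (continuous_fst.sub continuous_snd).norm.aestronglyMeasurable]
  have hmem : (∫ p, c₂ p.1 p.2 ∂(σ.map fun p => (p.1.1, p.2))) ∈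
      {r : ℝ | ∃ γ' : Measure (Em m × Em m), IsCoupling γ' μ ν₂ ∧
        r = ∫ p, c₂ p.1 p.2 ∂γ'} := ⟨_, hγ₂, rfl⟩
  calc Ccost c₂ μ ν₂ ≤ ∫ p, c₂ p.1 p.2 ∂(σ.map fun p => (p.1.1, p.2)) :=
        csInf_le (ccost_bddBelow hK hc₂ hμ hν₂) hmem
  _ = ∫ p, c₂ p.1.1 p.2 ∂σ := hi₂
  _ ≤ ∫ p, (c₁ p.1.1 p.1.2 + l * (‖p.1.2 - p.2‖ + s)) ∂σ := hmono
  _ = (∫ p, c₁ p.1 p.2 ∂γ) + l * ((∫ p, ‖p.1 - p.2‖ ∂η) + s) := by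
      rw [hsum, hi₁, hi₃]

lemma one_sided {K : Set (Em m)} (hK : IsCompact K)
    {c₁ c₂ : Em m → Em m → ℝ}
    (hc₁ : Continuous fun p : Em m × Em m => c₁ p.1 p.2)
    (hc₂ : Continuous fun p : Em m × Em m => c₂ p.1 p.2)
    {l s : ℝ}
    (hlip : ∀ x ∈ K, ∀ y ∈ K, ∀ z ∈ K, c₂ x z ≤ c₁ x y + l * (‖y - z‖ + s))
    {μ ν₁ ν₂ : Measure (Em m)} [IsProbabilityMeasure μ] [IsProbabilityMeasure ν₁]
    [IsProbabilityMeasure ν₂] (hμ : μ Kᶜ = 0) (hν₁ : ν₁ Kᶜ = 0) (hν₂ : ν₂ Kᶜ = 0)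
    {η : Measure (Em m × Em m)} (hη : IsCoupling η ν₁ ν₂) :
    Ccost c₂ μ ν₂ ≤ Ccost c₁ μ ν₁ + l * ((∫ p, ‖p.1 - p.2‖ ∂η) + s) := by
  have key : Ccost c₂ μ ν₂ - l * ((∫ p, ‖p.1 - p.2‖ ∂η) + s) ≤ Ccost c₁ μ ν₁ := by
    refine le_csInf ⟨_, ⟨_, coupling_prod μ ν₁, rfl⟩⟩ ?_
    rintro r ⟨γ, hγc, rfl⟩
    linarith [glue_estimate hK hc₁ hc₂ hlip hμ hν₁ hν₂ hγc hη]
  linarith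

end Paper

/-- part (2) of Theorem `thm:dyn-cost`: if the family of continuous
costs `c_t` is `l`-Lipschitz on `K` in `(t,y)`, uniformly in `x ∈ K`, then
`(t,ν) ↦ C^t(μ,ν)` is Lipschitz: `|C^{t₁}(μ,ν₁) − C^{t₂}(μ,ν₂)| ≤ l·(W₁(ν₁,ν₂)+|t₁−t₂|)`
for all `μ, ν₁, ν₂ ∈ 𝒫(K)` and `t₁, t₂ ∈ [a,b]`. -/
theorem statement9 {m : ℕ} (K : Set (Em m)) (hK : IsCompact K)
    (a b l : ℝ) (ha : 0 < a) (hab : a < b) (hl : 0 < l)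
    (c : ℝ → Em m → Em m → ℝ)
    (hcont : ∀ t ∈ Icc a b, Continuous fun p : Em m × Em m => c t p.1 p.2)
    (hlip : ∀ x ∈ K, ∀ y₁ ∈ K, ∀ y₂ ∈ K, ∀ t₁ ∈ Icc a b, ∀ t₂ ∈ Icc a b,
      |c t₁ x y₁ - c t₂ x y₂| ≤ l * (‖y₁ - y₂‖ + |t₁ - t₂|))
    (μ ν₁ ν₂ : Measure (Em m)) [IsProbabilityMeasure μ]
    [IsProbabilityMeasure ν₁] [IsProbabilityMeasure ν₂]
    (hμ : μ K = 1) (hν₁ : ν₁ K = 1) (hν₂ : ν₂ K = 1)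
    (t₁ t₂ : ℝ) (ht₁ : t₁ ∈ Icc a b) (ht₂ : t₂ ∈ Icc a b) :
    |Ccost (c t₁) μ ν₁ - Ccost (c t₂) μ ν₂| ≤ l * (W1 ν₁ ν₂ + |t₁ - t₂|) := by
  have hKm : MeasurableSet K := hK.isClosed.measurableSet
  have compl_zero : ∀ (ρ : Measure (Em m)), IsProbabilityMeasure ρ → ρ K = 1 → ρ Kᶜ = 0 := by
    intro ρ hρ h
    rw [measure_compl hKm (measure_ne_top ρ K), h, measure_univ, tsub_self]
  have hμc : μ Kᶜ = 0 := compl_zero μ inferInstance hμ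
  have hν₁c : ν₁ Kᶜ = 0 := compl_zero ν₁ inferInstance hν₁
  have hν₂c : ν₂ Kᶜ = 0 := compl_zero ν₂ inferInstance hν₂
  have hdiff : ∀ η : Measure (Em m × Em m), IsCoupling η ν₁ ν₂ →
      |Ccost (c t₁) μ ν₁ - Ccost (c t₂) μ ν₂|
        ≤ l * ((∫ p, ‖p.1 - p.2‖ ∂η) + |t₁ - t₂|) := by
    intro η hη
    have hlip12 : ∀ x ∈ K, ∀ y ∈ K, ∀ z ∈ K,
        c t₂ x z ≤ c t₁ x y + l * (‖y - z‖ + |t₁ - t₂|) := by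
      intro x hx y hy z hz
      have h := hlip x hx y hy z hz t₁ ht₁ t₂ ht₂
      have h2 := neg_abs_le (c t₁ x y - c t₂ x z)
      linarith
    have hlip21 : ∀ x ∈ K, ∀ y ∈ K, ∀ z ∈ K,
        c t₁ x z ≤ c t₂ x y + l * (‖y - z‖ + |t₁ - t₂|) := by
      intro x hx y hy z hz
      have h := hlip x hx z hz y hy t₁ ht₁ t₂ ht₂
      have h2 := le_abs_self (c t₁ x z - c t₂ x y)
      rw [norm_sub_rev] at h
      linarith
    have d1 := one_sided hK (hcont t₁ ht₁) (hcont t₂ ht₂) hlip12 hμc hν₁c hν₂c hη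
    have hηs : IsCoupling (η.map Prod.swap) ν₂ ν₁ := by
      constructor
      · rw [Measure.map_map measurable_fst measurable_swap]
        have he : (Prod.fst ∘ Prod.swap : Em m × Em m → Em m) = Prod.snd := rfl
        rw [he]; exact hη.2
      · rw [Measure.map_map measurable_snd measurable_swap]
        have he : (Prod.snd ∘ Prod.swap : Em m × Em m → Em m) = Prod.fst := rfl
        rw [he]; exact hη.1
    have d2 := one_sided hK (hcont t₂ ht₂) (hcont t₁ ht₁) hlip21 hμc hν₂c hν₁c hηs
    have hswapint : (∫ p, ‖p.1 - p.2‖ ∂(η.map Prod.swap)) = ∫ p, ‖p.1 - p.2‖ ∂η := by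
      calc (∫ p, ‖p.1 - p.2‖ ∂(η.map Prod.swap))
          = ∫ p, ‖(Prod.swap p).1 - (Prod.swap p).2‖ ∂η :=
            integral_map measurable_swap.aemeasurable
              (continuous_fst.sub continuous_snd).norm.aestronglyMeasurable
      _ = ∫ p, ‖p.1 - p.2‖ ∂η := by
            congr 1
            funext p
            rw [Prod.fst_swap, Prod.snd_swap, norm_sub_rev]
    rw [hswapint] at d2
    rw [abs_sub_le_iff]
    constructor
    · linarith
    · linarith
  have hW : (|Ccost (c t₁) μ ν₁ - Ccost (c t₂) μ ν₂| - l * |t₁ - t₂|) / l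
      ≤ W1 ν₁ ν₂ := by
    refine le_csInf ⟨_, ⟨_, coupling_prod ν₁ ν₂, rfl⟩⟩ ?_
    rintro r ⟨η, hη, rfl⟩
    rw [div_le_iff₀ hl]
    have h1 := hdiff η hη
    have h2 : l * ((∫ p, ‖p.1 - p.2‖ ∂η) + |t₁ - t₂|)
        = (∫ p, ‖p.1 - p.2‖ ∂η) * l + l * |t₁ - t₂| := by ring
    linarith
  rw [div_le_iff₀ hl] at hW
  have h3 : l * (W1 ν₁ ν₂ + |t₁ - t₂|) = W1 ν₁ ν₂ * l + l * |t₁ - t₂| := by ring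
  linarith
end
end

section
/- Let λ, t, R, κ > 0 and let c : ℝ^m × ℝ^m → ℝ be a cost such that for every x ∈ B(0,R) the map y ↦ c(x,y) is strongly convex with constant κ on B(x,λt): (1−s)c(x,y₁) + s·c(x,y₂) − c(x,(1−s)y₁+sy₂) ≥ κ·s(1−s)|y₁−y₂|² for all y₁, y₂ ∈ B(x,λt) and s ∈ [0,1]. Let C(μ,ν) := inf_{γ∈Γ(μ,ν)} ∫ c dγ, let μ₁, μ₂, μ₃ ∈ 𝒫(B(0,R)), and suppose there exist couplings γ₁₂ ∈ Γ(μ₁,μ₂) and γ₁₃ ∈ Γ(μ₁,μ₃) attaining C(μ₁,μ₂) and C(μ₁,μ₃) respectively, such that |x₁−x₂| ≤ λt for γ₁₂-a.e. (x₁,x₂) and |x₁−x₃| ≤ λt for γ₁₃-a.e. (x₁,x₃). Let γ be a Borel probability measure on ℝ^{3m} whose (1,2)-marginal is γ₁₂ and whose (1,3)-marginal is γ₁₃. Then for every s ∈ [0,1]: (1−s)C(μ₁,μ₂) + s·C(μ₁,μ₃) − C(μ₁, γ^s_{2→3}) ≥ κ·s(1−s)·∫|x₂−x₃|² dγ, where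 γ^s_{2→3} is the pushforward of γ under (x₁,x₂,x₃) ↦ (1−s)x₂ + s·x₃. -/
open MeasureTheory Metric Set
open scoped RealInnerProductSpace ENNReal

noncomputable section

open Paper

/-- Theorem `thm:semi-convex`: generalized semiconvexity of the
transport cost along generalized geodesics: if `y ↦ c(x,y)` is strongly convex with
constant `κ` on `B(x,λt)` for every `x ∈ B(0,R)`, `γ₁₂, γ₁₃` are optimal couplings for
`C(μ₁,μ₂)`, `C(μ₁,μ₃)` supported (a.e.) on `{|x₁ − xᵢ| ≤ λt}`, and `γ` glues them, then
`(1−s)C(μ₁,μ₂) + sC(μ₁,μ₃) − C(μ₁, γ^s_{2→3}) ≥ κ·s(1−s)·∫|x₂−x₃|² dγ`. -/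
theorem statement11 {m : ℕ} (lam t R κ : ℝ)
    (hlam : 0 < lam) (ht : 0 < t) (hR : 0 < R) (hκ : 0 < κ)
    (c : Em m → Em m → ℝ) (hcont : Continuous fun p : Em m × Em m => c p.1 p.2)
    (hconv : ∀ x ∈ ball (0 : Em m) R, ∀ y₁ ∈ closedBall x (lam * t),
      ∀ y₂ ∈ closedBall x (lam * t), ∀ s ∈ Icc (0 : ℝ) 1,
        κ * s * (1 - s) * ‖y₁ - y₂‖ ^ 2 ≤
          (1 - s) * c x y₁ + s * c x y₂ - c x ((1 - s) • y₁ + s • y₂))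
    (μ₁ μ₂ μ₃ : Measure (Em m)) [IsProbabilityMeasure μ₁]
    [IsProbabilityMeasure μ₂] [IsProbabilityMeasure μ₃]
    (h₁ : μ₁ (ball (0 : Em m) R) = 1) (h₂ : μ₂ (ball (0 : Em m) R) = 1)
    (h₃ : μ₃ (ball (0 : Em m) R) = 1)
    (γ₁₂ γ₁₃ : Measure (Em m × Em m))
    (hc₁₂ : IsCoupling γ₁₂ μ₁ μ₂) (hc₁₃ : IsCoupling γ₁₃ μ₁ μ₃)
    (ho₁₂ : ∫ p, c p.1 p.2 ∂γ₁₂ = Ccost c μ₁ μ₂)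
    (ho₁₃ : ∫ p, c p.1 p.2 ∂γ₁₃ = Ccost c μ₁ μ₃)
    (hae₁₂ : ∀ᵐ p ∂γ₁₂, ‖p.1 - p.2‖ ≤ lam * t)
    (hae₁₃ : ∀ᵐ p ∂γ₁₃, ‖p.1 - p.2‖ ≤ lam * t)
    (γ : Measure (Em m × Em m × Em m)) [IsProbabilityMeasure γ]
    (hm12 : γ.map (fun p => (p.1, p.2.1)) = γ₁₂)
    (hm13 : γ.map (fun p => (p.1, p.2.2)) = γ₁₃)
    (s : ℝ) (hs : s ∈ Icc (0 : ℝ) 1) :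
    κ * s * (1 - s) * ∫ p, ‖p.2.1 - p.2.2‖ ^ 2 ∂γ ≤
      (1 - s) * Ccost c μ₁ μ₂ + s * Ccost c μ₁ μ₃ -
        Ccost c μ₁ (γ.map fun p => (1 - s) • p.2.1 + s • p.2.2) := by
  obtain ⟨hs0, hs1⟩ := hs
  have hlt : 0 < lam * t := mul_pos hlam ht
  set K : Set (Em m) := closedBall (0 : Em m) (R + lam * t) with hKdef
  have hKcpt : IsCompact K := isCompact_closedBall _ _
  -- bound on c over K ×ˢ K
  obtain ⟨M, hM⟩ := (hKcpt.prod hKcpt).exists_bound_of_continuousOn hcont.continuousOn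
  have h0K : (0 : Em m) ∈ K := by
    simp only [hKdef, mem_closedBall, dist_self]
    positivity
  have hM0 : 0 ≤ M := le_trans (norm_nonneg _) (hM (0, 0) ⟨h0K, h0K⟩)
  -- measurable maps
  have hg12 : Measurable (fun p : Em m × Em m × Em m => (p.1, p.2.1)) := by fun_prop
  have hg13 : Measurable (fun p : Em m × Em m × Em m => (p.1, p.2.2)) := by fun_prop
  have hcombocont : Continuous (fun p : Em m × Em m × Em m =>
      (1 - s) • p.2.1 + s • p.2.2) := by fun_prop
  have hcombo : Measurable (fun p : Em m × Em m × Em m =>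
      (1 - s) • p.2.1 + s • p.2.2) := hcombocont.measurable
  have hg1s : Measurable (fun p : Em m × Em m × Em m =>
      (p.1, (1 - s) • p.2.1 + s • p.2.2)) := by fun_prop
  have hfst3 : Measurable (fun p : Em m × Em m × Em m => p.1) := measurable_fst
  -- γ.map fst = μ₁
  have hmap1 : γ.map (fun p : Em m × Em m × Em m => p.1) = μ₁ := by
    have h := hc₁₂.1
    rw [← hm12, Measure.map_map measurable_fst hg12] at h
    exact h
  -- a.e. facts on γ
  have h1' : ∀ᵐ x ∂μ₁, x ∈ ball (0 : Em m) R := by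
    rw [ae_iff]
    have hset : {x : Em m | ¬ x ∈ ball (0 : Em m) R} = (ball (0 : Em m) R)ᶜ := rfl
    rw [hset, measure_compl measurableSet_ball (measure_ne_top _ _), h₁]
    simp
  have hae1 : ∀ᵐ p ∂γ, (p.1 : Em m) ∈ ball (0 : Em m) R := by
    rw [← hmap1] at h1'
    exact (ae_map_iff hfst3.aemeasurable measurableSet_ball).mp h1'
  have hsetle : MeasurableSet {q : Em m × Em m | ‖q.1 - q.2‖ ≤ lam * t} :=
    (isClosed_le (by fun_prop) continuous_const).measurableSet
  have hae2 : ∀ᵐ p ∂γ, ‖p.1 - p.2.1‖ ≤ lam * t := by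
    rw [← hm12] at hae₁₂
    exact (ae_map_iff hg12.aemeasurable hsetle).mp hae₁₂
  have hae3 : ∀ᵐ p ∂γ, ‖p.1 - p.2.2‖ ≤ lam * t := by
    rw [← hm13] at hae₁₃
    exact (ae_map_iff hg13.aemeasurable hsetle).mp hae₁₃
  have hRK : ∀ x : Em m, x ∈ ball (0 : Em m) R → x ∈ K := by
    intro x hx
    rw [mem_ball_zero_iff] at hx
    rw [hKdef, mem_closedBall_zero_iff]
    nlinarith
  have haeK1 : ∀ᵐ p ∂γ, (p.1 : Em m) ∈ K := by
    filter_upwards [hae1] with p h1 using hRK _ h1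
  have haeK2 : ∀ᵐ p ∂γ, (p.2.1 : Em m) ∈ K := by
    filter_upwards [hae1, hae2] with p h1 h2
    rw [mem_ball_zero_iff] at h1
    rw [hKdef, mem_closedBall_zero_iff]
    calc ‖p.2.1‖ = ‖p.1 + (p.2.1 - p.1)‖ := by congr 1; abel
      _ ≤ ‖p.1‖ + ‖p.2.1 - p.1‖ := norm_add_le _ _
      _ ≤ R + lam * t := by rw [norm_sub_rev]; exact add_le_add h1.le h2
  have haeK3 : ∀ᵐ p ∂γ, (p.2.2 : Em m) ∈ K := by
    filter_upwards [hae1, hae3] with p h1 h3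
    rw [mem_ball_zero_iff] at h1
    rw [hKdef, mem_closedBall_zero_iff]
    calc ‖p.2.2‖ = ‖p.1 + (p.2.2 - p.1)‖ := by congr 1; abel
      _ ≤ ‖p.1‖ + ‖p.2.2 - p.1‖ := norm_add_le _ _
      _ ≤ R + lam * t := by rw [norm_sub_rev]; exact add_le_add h1.le h3
  have haeKc : ∀ᵐ p ∂γ, ((1 - s) • p.2.1 + s • p.2.2 : Em m) ∈ K := by
    filter_upwards [haeK2, haeK3] with p h2 h3
    rw [hKdef, mem_closedBall_zero_iff] at *
    have hs1' : 0 ≤ 1 - s := by linarith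
    calc ‖(1 - s) • p.2.1 + s • p.2.2‖ ≤ ‖(1 - s) • p.2.1‖ + ‖s • p.2.2‖ := norm_add_le _ _
      _ = (1 - s) * ‖p.2.1‖ + s * ‖p.2.2‖ := by
          rw [norm_smul, norm_smul, Real.norm_eq_abs, Real.norm_eq_abs,
            abs_of_nonneg hs1', abs_of_nonneg hs0]
      _ ≤ (1 - s) * (R + lam * t) + s * (R + lam * t) := by
          apply add_le_add <;> apply mul_le_mul_of_nonneg_left <;> assumption
      _ = R + lam * t := by ring
  -- pointwise key inequality
  have hkey : ∀ᵐ p ∂γ, κ * s * (1 - s) * ‖p.2.1 - p.2.2‖ ^ 2 ≤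
      (1 - s) * c p.1 p.2.1 + s * c p.1 p.2.2 -
        c p.1 ((1 - s) • p.2.1 + s • p.2.2) := by
    filter_upwards [hae1, hae2, hae3] with p h1 h2 h3
    exact hconv p.1 h1 p.2.1 (by rw [mem_closedBall_iff_norm, norm_sub_rev]; exact h2)
      p.2.2 (by rw [mem_closedBall_iff_norm, norm_sub_rev]; exact h3) s ⟨hs0, hs1⟩
  -- integrability
  have I2 : Integrable (fun p : Em m × Em m × Em m => c p.1 p.2.1) γ := by
    refine Integrable.mono' (integrable_const M)
      ((hcont.comp (by fun_prop : Continuous (fun p : Em m × Em m × Em m =>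
        (p.1, p.2.1)))).aestronglyMeasurable) ?_
    filter_upwards [haeK1, haeK2] with p h1 h2
    exact hM (p.1, p.2.1) ⟨h1, h2⟩
  have I3 : Integrable (fun p : Em m × Em m × Em m => c p.1 p.2.2) γ := by
    refine Integrable.mono' (integrable_const M)
      ((hcont.comp (by fun_prop : Continuous (fun p : Em m × Em m × Em m =>
        (p.1, p.2.2)))).aestronglyMeasurable) ?_
    filter_upwards [haeK1, haeK3] with p h1 h3
    exact hM (p.1, p.2.2) ⟨h1, h3⟩
  have Is : Integrable (fun p : Em m × Em m × Em m =>
      c p.1 ((1 - s) • p.2.1 + s • p.2.2)) γ := by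
    refine Integrable.mono' (integrable_const M)
      ((hcont.comp (by fun_prop : Continuous (fun p : Em m × Em m × Em m =>
        (p.1, (1 - s) • p.2.1 + s • p.2.2)))).aestronglyMeasurable) ?_
    filter_upwards [haeK1, haeKc] with p h1 hc'
    exact hM (p.1, (1 - s) • p.2.1 + s • p.2.2) ⟨h1, hc'⟩
  have Iq : Integrable (fun p : Em m × Em m × Em m => ‖p.2.1 - p.2.2‖ ^ 2) γ := by
    refine Integrable.mono' (integrable_const ((2 * (R + lam * t)) ^ 2))
      ((by fun_prop : Continuous (fun p : Em m × Em m × Em m =>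
        ‖p.2.1 - p.2.2‖ ^ 2)).aestronglyMeasurable) ?_
    filter_upwards [haeK2, haeK3] with p h2 h3
    rw [hKdef, mem_closedBall_zero_iff] at h2 h3
    rw [Real.norm_eq_abs, abs_of_nonneg (by positivity)]
    have h4 : ‖p.2.1 - p.2.2‖ ≤ 2 * (R + lam * t) := by
      calc ‖p.2.1 - p.2.2‖ ≤ ‖p.2.1‖ + ‖p.2.2‖ := norm_sub_le _ _
        _ ≤ 2 * (R + lam * t) := by linarith
    have h5 : (0 : ℝ) ≤ ‖p.2.1 - p.2.2‖ := norm_nonneg _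
    nlinarith
  -- transfer the integrals along the marginals
  have e12 : ∫ p, c p.1 p.2 ∂γ₁₂ = ∫ p, c p.1 p.2.1 ∂γ := by
    rw [← hm12, integral_map hg12.aemeasurable]
    rw [hm12]
    exact hcont.aestronglyMeasurable
  have e13 : ∫ p, c p.1 p.2 ∂γ₁₃ = ∫ p, c p.1 p.2.2 ∂γ := by
    rw [← hm13, integral_map hg13.aemeasurable]
    rw [hm13]
    exact hcont.aestronglyMeasurable
  -- the glued coupling to νs
  set νs := γ.map (fun p : Em m × Em m × Em m => (1 - s) • p.2.1 + s • p.2.2) with hνs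
  set γ1s := γ.map (fun p : Em m × Em m × Em m =>
    (p.1, (1 - s) • p.2.1 + s • p.2.2)) with hγ1s
  have hcup : IsCoupling γ1s μ₁ νs := by
    constructor
    · rw [hγ1s, Measure.map_map measurable_fst hg1s]
      exact hmap1
    · rw [hγ1s, hνs, Measure.map_map measurable_snd hg1s]
      rfl
  -- νs is concentrated on K
  have hνsK : ∀ᵐ y ∂νs, y ∈ K := by
    rw [hνs]
    exact (ae_map_iff hcombo.aemeasurable hKcpt.isClosed.measurableSet).mpr haeKc
  have hμ₁K : ∀ᵐ x ∂μ₁, x ∈ K := by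
    filter_upwards [h1'] with x hx using hRK _ hx
  -- the Ccost set to νs is bounded below
  have hbdd : BddBelow {r : ℝ | ∃ γ' : Measure (Em m × Em m), IsCoupling γ' μ₁ νs ∧
      r = ∫ p, c p.1 p.2 ∂γ'} := by
    refine ⟨-M, ?_⟩
    rintro r ⟨γ', ⟨hf', hsnd'⟩, rfl⟩
    have hK1' : ∀ᵐ p ∂γ', (p.1 : Em m) ∈ K := by
      rw [← hf'] at hμ₁K
      exact (ae_map_iff measurable_fst.aemeasurable hKcpt.isClosed.measurableSet).mp hμ₁K
    have hK2' : ∀ᵐ p ∂γ', (p.2 : Em m) ∈ K := by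
      rw [← hsnd'] at hνsK
      exact (ae_map_iff measurable_snd.aemeasurable hKcpt.isClosed.measurableSet).mp hνsK
    have hbound : ∀ᵐ p ∂γ', -M ≤ c p.1 p.2 := by
      filter_upwards [hK1', hK2'] with p h1 h2
      have := hM (p.1, p.2) ⟨h1, h2⟩
      rw [Real.norm_eq_abs] at this
      linarith [abs_le.mp this]
    by_cases hint : Integrable (fun p : Em m × Em m => c p.1 p.2) γ'
    · have hprob : γ' univ = 1 := by
        have := congrArg (fun μ : Measure (Em m) => μ univ) hf'
        simpa [Measure.map_apply measurable_fst MeasurableSet.univ] using this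
      haveI : IsProbabilityMeasure γ' := ⟨hprob⟩
      have h2' : (∫ _ : Em m × Em m, (-M : ℝ) ∂γ') ≤ ∫ p, c p.1 p.2 ∂γ' :=
        integral_mono_ae (integrable_const _) hint hbound
      simpa using h2'
    · rw [integral_undef hint]
      linarith
  -- Ccost to νs is at most the cost of γ1s
  have hCle : Ccost c μ₁ νs ≤ ∫ p, c p.1 ((1 - s) • p.2.1 + s • p.2.2) ∂γ := by
    have hmem : (∫ p, c p.1 p.2 ∂γ1s) ∈ {r : ℝ |
        ∃ γ' : Measure (Em m × Em m), IsCoupling γ' μ₁ νs ∧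
          r = ∫ p, c p.1 p.2 ∂γ'} := ⟨γ1s, hcup, rfl⟩
    have h := csInf_le hbdd hmem
    rw [hγ1s, integral_map hg1s.aemeasurable] at h
    · exact h
    · rw [← hγ1s]
      exact hcont.aestronglyMeasurable
  -- main integral inequality
  have hmono : ∫ p, κ * s * (1 - s) * ‖p.2.1 - p.2.2‖ ^ 2 ∂γ ≤
      ∫ p, ((1 - s) * c p.1 p.2.1 + s * c p.1 p.2.2 -
        c p.1 ((1 - s) • p.2.1 + s • p.2.2)) ∂γ :=
    integral_mono_ae (Iq.const_mul _) (((I2.const_mul _).add (I3.const_mul _)).sub Is) hkey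
  have Ia : Integrable (fun p : Em m × Em m × Em m =>
      (1 - s) * c p.1 p.2.1) γ := I2.const_mul _
  have Ib : Integrable (fun p : Em m × Em m × Em m =>
      s * c p.1 p.2.2) γ := I3.const_mul _
  have Iab : Integrable (fun p : Em m × Em m × Em m =>
      (1 - s) * c p.1 p.2.1 + s * c p.1 p.2.2) γ := Ia.add Ib
  rw [integral_const_mul] at hmono
  rw [integral_sub Iab Is, integral_add Ia Ib,
    integral_const_mul, integral_const_mul] at hmono
  have hA : ∫ p, c p.1 p.2.1 ∂γ = Ccost c μ₁ μ₂ := by rw [← e12]; exact ho₁₂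
  have hB : ∫ p, c p.1 p.2.2 ∂γ = Ccost c μ₁ μ₃ := by rw [← e13]; exact ho₁₃
  rw [hA, hB] at hmono
  linarith
end
end

section
/- Let μ₁, μ₂, μ₃ be Borel probability measures on ℝ^m, let γ ∈ Γ(μ₂,μ₃), let λ ∈ [0,1], and let μ_λ ∈ Γ(μ₁, γ^λ_{1→2}) be any coupling of μ₁ and γ^λ_{1→2}. Then there exists a Borel probability measure γ_λ on ℝ^{3m} such that: its first marginal is μ₁, its (2,3)-marginal equals γ, and the pushforward of γ_λ under the map (x₁,x₂,x₃) ↦ (x₁, (1−λ)x₂ + λx₃) equals μ_λ. -/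
open MeasureTheory Metric Set
open scoped RealInnerProductSpace ENNReal

noncomputable section

open Paper
open scoped ProbabilityTheory

/-- Lemma `lem:gluing_lambda`: given `γ ∈ Γ(μ₂,μ₃)`, `λ ∈ [0,1]` and any
coupling `μ_λ ∈ Γ(μ₁, γ^λ_{1→2})`, there exists a probability measure `γ_λ` on `ℝ^{3m}`
whose first marginal is `μ₁`, whose `(2,3)`-marginal is `γ`, and whose pushforward under
`(x₁,x₂,x₃) ↦ (x₁, (1−λ)x₂ + λx₃)` is `μ_λ`. -/
theorem statement12 {m : ℕ} (μ₁ μ₂ μ₃ : Measure (Em m))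
    [IsProbabilityMeasure μ₁] [IsProbabilityMeasure μ₂] [IsProbabilityMeasure μ₃]
    (γ : Measure (Em m × Em m)) (hγ : IsCoupling γ μ₂ μ₃)
    (lam : ℝ) (hlam : lam ∈ Icc (0 : ℝ) 1)
    (μl : Measure (Em m × Em m))
    (hμl : IsCoupling μl μ₁ (γ.map fun p => (1 - lam) • p.1 + lam • p.2)) :
    ∃ γl : Measure (Em m × Em m × Em m), IsProbabilityMeasure γl ∧
      γl.map (fun p => p.1) = μ₁ ∧
      γl.map (fun p => p.2) = γ ∧
      γl.map (fun p => (p.1, (1 - lam) • p.2.1 + lam • p.2.2)) = μl := by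
  classical
  -- notation
  set T : Em m × Em m → Em m := fun p => (1 - lam) • p.1 + lam • p.2 with hT
  have hTmeas : Measurable T := by
    fun_prop
  have hpair : Measurable (fun p : Em m × Em m => (T p, p)) := hTmeas.prodMk measurable_id
  -- ρ : measure on Em m × (Em m × Em m)
  set ρ : Measure (Em m × (Em m × Em m)) := γ.map (fun p => (T p, p)) with hρ
  have : IsProbabilityMeasure γ := by
    constructor
    have := hγ.1
    have h := congrArg (fun μ : Measure (Em m) => μ Set.univ) this
    simpa [Measure.map_apply measurable_fst] using h
  have : IsProbabilityMeasure ρ := Measure.isProbabilityMeasure_map hpair.aemeasurable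
  have hρfst : ρ.fst = γ.map T := by
    rw [hρ, Measure.fst, Measure.map_map measurable_fst hpair]
    rfl
  have hρsnd : ρ.map Prod.snd = γ := by
    rw [hρ, Measure.map_map measurable_snd hpair]
    exact Measure.map_id
  set κ := ρ.condKernel with hκ
  have hdis : ρ.fst ⊗ₘ κ = ρ := ρ.disintegrate ρ.condKernel
  -- the kernel from (x₁, w) to (y,z)
  set K : ProbabilityTheory.Kernel (Em m × Em m) (Em m × Em m) :=
    κ.comap Prod.snd measurable_snd with hK
  have hKapp : ∀ q : Em m × Em m, K q = κ q.2 := fun q => rfl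
  set τ : Measure ((Em m × Em m) × (Em m × Em m)) := μl ⊗ₘ K with hτ
  have : IsProbabilityMeasure μl := by
    constructor
    have h := congrArg (fun μ : Measure (Em m) => μ Set.univ) hμl.1
    simpa [Measure.map_apply measurable_fst] using h
  have : IsProbabilityMeasure τ := by
    rw [hτ]; infer_instance
  have hF : Measurable (fun q : (Em m × Em m) × (Em m × Em m) => (q.1.1, q.2)) :=
    (measurable_fst.fst).prodMk measurable_snd
  refine ⟨τ.map (fun q => (q.1.1, q.2)), Measure.isProbabilityMeasure_map hF.aemeasurable, ?_, ?_, ?_⟩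
  · -- first marginal
    rw [Measure.map_map measurable_fst hF]
    have : ((fun p : Em m × (Em m × Em m) => p.1) ∘ fun q : (Em m × Em m) × (Em m × Em m) =>
        (q.1.1, q.2)) = (fun a : Em m × Em m => a.1) ∘ Prod.fst := rfl
    rw [this, ← Measure.map_map measurable_fst measurable_fst]
    have hfst : τ.map Prod.fst = μl := by
      rw [hτ]; exact Measure.fst_compProd μl K
    rw [hfst, hμl.1]
  · -- (2,3)-marginal
    rw [Measure.map_map measurable_snd hF]
    have h1 : ((fun p : Em m × (Em m × Em m) => p.2) ∘ fun q : (Em m × Em m) × (Em m × Em m) =>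
        (q.1.1, q.2)) = Prod.snd := rfl
    rw [h1]
    -- τ.map snd = γ
    ext s hs
    rw [Measure.map_apply measurable_snd hs, hτ,
      Measure.compProd_apply (measurable_snd hs)]
    have h2 : ∀ q : Em m × Em m, K q (Prod.mk q ⁻¹' (Prod.snd ⁻¹' s)) = κ q.2 s := by
      intro q; rfl
    simp_rw [h2]
    have h3 : ∫⁻ q, κ q.2 s ∂μl = ∫⁻ w, κ w s ∂(μl.map Prod.snd) := by
      rw [lintegral_map (ProbabilityTheory.Kernel.measurable_coe κ hs) measurable_snd]
    rw [h3, hμl.2, ← hρfst]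
    have h4 : ∫⁻ w, κ w s ∂ρ.fst = (ρ.fst ⊗ₘ κ) (Prod.snd ⁻¹' s) := by
      rw [Measure.compProd_apply (measurable_snd hs)]
      rfl
    rw [h4, hdis, ← hρsnd, Measure.map_apply measurable_snd hs]
  · -- pushforward under (x₁, T(x₂,x₃)) is μl
    have hG : Measurable (fun p : Em m × (Em m × Em m) => (p.1, T p.2)) :=
      measurable_fst.prodMk (hTmeas.comp measurable_snd)
    rw [Measure.map_map hG hF]
    have h1 : ((fun p : Em m × (Em m × Em m) => (p.1, T p.2)) ∘
        fun q : (Em m × Em m) × (Em m × Em m) => (q.1.1, q.2)) =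
        fun q : (Em m × Em m) × (Em m × Em m) => (q.1.1, T q.2) := rfl
    rw [h1]
    -- key a.e. concentration of κ on fibers
    have hSmeas : MeasurableSet {p : Em m × (Em m × Em m) | T p.2 ≠ p.1} :=
      (measurableSet_eq_fun (f := fun p : Em m × (Em m × Em m) => T p.2)
        (hTmeas.comp measurable_snd) measurable_fst).compl
    have hSnull : ρ {p : Em m × (Em m × Em m) | T p.2 ≠ p.1} = 0 := by
      rw [hρ, Measure.map_apply hpair hSmeas]
      have : (fun p : Em m × Em m => (T p, p)) ⁻¹' {p : Em m × (Em m × Em m) | T p.2 ≠ p.1}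
          = ∅ := by ext p; simp
      rw [this]; simp
    rw [← hdis] at hSnull
    rw [Measure.compProd_apply hSmeas] at hSnull
    have hae : ∀ᵐ w ∂ρ.fst, κ w {p : Em m × Em m | T p ≠ w} = 0 := by
      have := (lintegral_eq_zero_iff
        (ProbabilityTheory.Kernel.measurable_kernel_prodMk_left hSmeas)).mp hSnull
      filter_upwards [this] with w hw
      exact hw
    -- transfer to μl
    have haeμl : ∀ᵐ q ∂μl, κ q.2 {p : Em m × Em m | T p ≠ q.2} = 0 := by
      rw [hρfst, ← hμl.2] at hae
      exact ae_of_ae_map measurable_snd.aemeasurable hae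
    -- compute
    ext s hs
    have hG2 : Measurable (fun q : (Em m × Em m) × (Em m × Em m) => (q.1.1, T q.2)) :=
      (measurable_fst.fst).prodMk (hTmeas.comp measurable_snd)
    rw [Measure.map_apply hG2 hs, hτ, Measure.compProd_apply (hG2 hs)]
    have key : ∀ᵐ q ∂μl,
        K q (Prod.mk q ⁻¹' ((fun q : (Em m × Em m) × (Em m × Em m) =>
          (q.1.1, T q.2)) ⁻¹' s)) = s.indicator 1 q := by
      filter_upwards [haeμl] with q hq
      have hKq : K q = κ q.2 := rfl
      rw [hKq]
      have haeT : ∀ᵐ p ∂(κ q.2), T p = q.2 := by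
        rw [ae_iff]; exact hq
      have hset : (Prod.mk q ⁻¹' ((fun q : (Em m × Em m) × (Em m × Em m) =>
          (q.1.1, T q.2)) ⁻¹' s)) = {p : Em m × Em m | (q.1, T p) ∈ s} := rfl
      rw [hset]
      have heq : {p : Em m × Em m | (q.1, T p) ∈ s} =ᵐ[κ q.2]
          (if q ∈ s then Set.univ else (∅ : Set (Em m × Em m))) := by
        filter_upwards [haeT] with p hp
        have hpq : (q.1, T p) = q := by rw [hp]
        by_cases hqs : q ∈ s
        · show ((q.1, T p) ∈ s) = (p ∈ (if q ∈ s then Set.univ else (∅ : Set (Em m × Em m))))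
          rw [if_pos hqs]
          show ((q.1, T p) ∈ s) = (p ∈ Set.univ)
          simp [hpq, hqs]
        · show ((q.1, T p) ∈ s) = (p ∈ (if q ∈ s then Set.univ else (∅ : Set (Em m × Em m))))
          rw [if_neg hqs]
          show ((q.1, T p) ∈ s) = (p ∈ (∅ : Set (Em m × Em m)))
          simp [hpq, hqs]
      rw [measure_congr heq]
      by_cases hqs : q ∈ s
      · simp [hqs]
      · simp [hqs]
    rw [lintegral_congr_ae key, lintegral_indicator_one hs]
end
end

section
/- Let c : ℝ^m × ℝ^m → ℝ be continuous, let φ : ℝ^m → ℝ be lower semicontinuous, and suppose there is R > 0 such that for every y ∈ ℝ^m the infimum Tφ(y) := inf_{x∈ℝ^m} (φ(x) + c(x,y)) is finite and is attained at some point of the closed ball of radius R centered at y. Then for every ν ∈ 𝒫_c(ℝ^m): ∫ Tφ dν = inf { ∫ (φ(x) + c(x,y)) dγ : μ ∈ 𝒫_c(ℝ^m), γ ∈ Γ(μ,ν) }, and this infimum is attained by some μ ∈ 𝒫_c(ℝ^m) and γ ∈ Γ(μ,ν) with supp(μ) ⊂ ∪_{y∈supp(ν)} closedBall(y,R). Moreover,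 for any such minimizing pair one has Tφ(y) = φ(x) + c(x,y) for every (x,y) ∈ supp(γ). -/
open MeasureTheory Metric Set
open scoped RealInnerProductSpace ENNReal

noncomputable section

open Paper


section AuxLemmas

open Filter Topology

/-- Projection of a closed set along a compact factor is closed. -/
private lemma isClosed_exists_compact {m : ℕ} {C : Set (Em m × Em m)} (hC : IsClosed C)
    {K : Set (Em m)} (hK : IsCompact K) :
    IsClosed {y : Em m | ∃ x ∈ K, (x, y) ∈ C} := by
  apply IsSeqClosed.isClosed
  intro ys y hys hy
  choose x hxK hxC using hys
  obtain ⟨a, haK, ψ, hψ, hψt⟩ := hK.tendsto_subseq hxK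
  exact ⟨a, haK, hC.mem_of_tendsto (hψt.prodMk_nhds (hy.comp hψ.tendsto_atTop))
    (Eventually.of_forall fun n => hxC _)⟩

/-- A lower semicontinuous function is bounded below on a compact set. -/
private lemma lsc_bddBelow {m : ℕ} {φ : Em m → ℝ} (hφ : LowerSemicontinuous φ)
    {K : Set (Em m)} (hK : IsCompact K) : ∃ B : ℝ, ∀ x ∈ K, B ≤ φ x := by
  have hcov : K ⊆ ⋃ n : ℕ, φ ⁻¹' Ioi (-(n : ℝ)) := by
    intro x _
    obtain ⟨n, hn⟩ := exists_nat_gt (-φ x)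
    exact mem_iUnion.2 ⟨n, by simp only [mem_preimage, mem_Ioi]; linarith⟩
  obtain ⟨t, ht⟩ := hK.elim_finite_subcover (fun n : ℕ => φ ⁻¹' Ioi (-(n : ℝ)))
    (fun n => hφ.isOpen_preimage _) hcov
  refine ⟨-(t.sup id : ℕ), fun x hx => ?_⟩
  obtain ⟨n, hn, hxn⟩ : ∃ n ∈ t, x ∈ φ ⁻¹' Ioi (-(n : ℝ)) := by
    simpa using ht hx
  have h1 : (n : ℝ) ≤ ((t.sup id : ℕ) : ℝ) := Nat.cast_le.2 (Finset.le_sup (f := id) hn)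
  have h2 : -(n : ℝ) < φ x := hxn
  linarith

/-- Measurable selection for a closed set with nonempty fibers. -/
private lemma exists_meas_selection {m : ℕ} {A : Set (Em m × Em m)} (hA : IsClosed A)
    (hne : ∀ y : Em m, ∃ x, (x, y) ∈ A) :
    ∃ s : Em m → Em m, Measurable s ∧ ∀ y, (s y, y) ∈ A := by
  classical
  obtain ⟨q, hq⟩ := TopologicalSpace.exists_dense_seq (Em m)
  set e : ℕ → ℝ := fun n => (1 / 2 : ℝ) ^ n with he
  have hepos : ∀ n, 0 < e n := fun n => by positivity
  set S : Em m → Set (Em m) := fun y => {x | (x, y) ∈ A} with hS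
  have hSclosed : ∀ y, IsClosed (S y) := fun y =>
    hA.preimage (Continuous.prodMk_left y)
  have hGmeas : ∀ K : Set (Em m), IsCompact K → MeasurableSet {y | (S y ∩ K).Nonempty} := by
    intro K hK
    have heq : {y | (S y ∩ K).Nonempty} = {y : Em m | ∃ x ∈ K, (x, y) ∈ A} := by
      ext y
      constructor
      · rintro ⟨x, hxS, hxK⟩; exact ⟨x, hxK, hxS⟩
      · rintro ⟨x, hxK, hxS⟩; exact ⟨x, hxS, hxK⟩
    rw [heq]
    exact (isClosed_exists_compact hA hK).measurableSet
  have hstep : ∀ (y : Em m) (n j : ℕ), (S y ∩ closedBall (q j) (e n)).Nonempty →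
      ∃ i, (S y ∩ closedBall (q i) (e (n + 1)) ∩ closedBall (q j) (e n)).Nonempty := by
    rintro y n j ⟨x, hxS, hxj⟩
    obtain ⟨i, hi⟩ := hq.exists_dist_lt x (hepos (n + 1))
    exact ⟨i, x, ⟨hxS, mem_closedBall.2 hi.le⟩, hxj⟩
  have h0 : ∀ y : Em m, ∃ i, (S y ∩ closedBall (q i) (e 0)).Nonempty := by
    intro y
    obtain ⟨x, hx⟩ := hne y
    obtain ⟨i, hi⟩ := hq.exists_dist_lt x (hepos 0)
    exact ⟨i, x, hx, mem_closedBall.2 hi.le⟩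
  let F : (y : Em m) → (n : ℕ) → {i : ℕ // (S y ∩ closedBall (q i) (e n)).Nonempty} :=
    fun y => Nat.rec
      ⟨Nat.find (h0 y), Nat.find_spec (h0 y)⟩
      (fun n prev => ⟨Nat.find (hstep y n prev.1 prev.2),
        Exists.imp (fun _ hx => hx.1) (Nat.find_spec (hstep y n prev.1 prev.2))⟩)
  have hFsucc : ∀ (y : Em m) (n : ℕ),
      (F y (n + 1)).1 = Nat.find (hstep y n (F y n).1 (F y n).2) := fun _ _ => rfl
  have hFmeas : ∀ n : ℕ, Measurable fun y => (F y n).1 := by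
    intro n
    induction n with
    | zero =>
      exact measurable_find h0 fun k => hGmeas _ (isCompact_closedBall _ _)
    | succ n ihn =>
      have hm : ∀ k, MeasurableSet {y | (S y ∩ closedBall (q k) (e (n + 1)) ∩
          closedBall (q ((F y n).1)) (e n)).Nonempty} := by
        intro k
        have heq : {y | (S y ∩ closedBall (q k) (e (n + 1)) ∩
              closedBall (q ((F y n).1)) (e n)).Nonempty}
            = ⋃ j : ℕ, ((fun y => (F y n).1) ⁻¹' {j}) ∩
                {y | (S y ∩ (closedBall (q k) (e (n + 1)) ∩ closedBall (q j) (e n))).Nonempty} := by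
          ext y
          simp only [mem_iUnion, mem_inter_iff, mem_preimage, mem_singleton_iff, mem_setOf_eq]
          constructor
          · intro h
            exact ⟨(F y n).1, rfl, by rwa [← inter_assoc]⟩
          · rintro ⟨j, hj, h⟩
            rw [← hj] at h
            rwa [inter_assoc]
        rw [heq]
        exact MeasurableSet.iUnion fun j => (ihn (measurableSet_singleton j)).inter
          (hGmeas _ ((isCompact_closedBall _ _).inter_right Metric.isClosed_closedBall))
      exact measurable_find (fun y => hstep y n (F y n).1 (F y n).2) hm
  set xs : ℕ → Em m → Em m := fun n y => q ((F y n).1) with hxs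
  have hxsmeas : ∀ n, Measurable (xs n) := fun n => measurable_from_nat.comp (hFmeas n)
  have hdist : ∀ (y : Em m) (n : ℕ), dist (xs (n + 1) y) (xs n y) ≤ e (n + 1) + e n := by
    intro y n
    obtain ⟨x, ⟨_, hx1⟩, hx2⟩ := Nat.find_spec (hstep y n (F y n).1 (F y n).2)
    have h1 : dist (xs (n + 1) y) x ≤ e (n + 1) := by
      rw [hxs]
      simp only [hFsucc y n]
      rw [dist_comm]
      exact mem_closedBall.1 hx1
    have h2 : dist x (xs n y) ≤ e n := mem_closedBall.1 hx2
    calc dist (xs (n + 1) y) (xs n y) ≤ dist (xs (n + 1) y) x + dist x (xs n y) :=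
          dist_triangle _ _ _
      _ ≤ e (n + 1) + e n := add_le_add h1 h2
  have hcauchy : ∀ y : Em m, CauchySeq fun n => xs n y := by
    intro y
    refine cauchySeq_of_le_geometric (1 / 2 : ℝ) 3 (by norm_num) fun n => ?_
    have h := hdist y n
    rw [dist_comm] at h
    refine h.trans ?_
    have he2 : e (n + 1) + e n = (3 / 2) * (1 / 2 : ℝ) ^ n := by
      rw [he]; ring
    rw [he2]
    have hp : (0 : ℝ) < (1 / 2 : ℝ) ^ n := by positivity
    nlinarith
  have hlim : ∀ y : Em m, ∃ a, Tendsto (fun n => xs n y) atTop (𝓝 a) := fun y =>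
    cauchySeq_tendsto_of_complete (hcauchy y)
  refine ⟨fun y => (hlim y).choose, ?_, ?_⟩
  · exact measurable_of_tendsto_metrizable hxsmeas
      (tendsto_pi_nhds.2 fun y => (hlim y).choose_spec)
  · intro y
    set sy := (hlim y).choose with hsy
    have hst : Tendsto (fun n => xs n y) atTop (𝓝 sy) := (hlim y).choose_spec
    have hcl : sy ∈ closure (S y) := by
      rw [Metric.mem_closure_iff]
      intro ε hε
      obtain ⟨N, hN⟩ := Metric.tendsto_atTop.1 hst (ε / 2) (by linarith)
      obtain ⟨n0, hn0⟩ : ∃ n0 : ℕ, (1 / 2 : ℝ) ^ n0 < ε / 2 :=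
        exists_pow_lt_of_lt_one (by linarith) (by norm_num)
      set n := max N n0 with hn
      obtain ⟨z, hzS, hzb⟩ := (F y n).2
      refine ⟨z, hzS, ?_⟩
      have h1 : dist sy (xs n y) < ε / 2 := by
        rw [dist_comm]; exact hN n (le_max_left _ _)
      have h2 : dist (xs n y) z ≤ e n := by
        rw [dist_comm]; exact mem_closedBall.1 hzb
      have h3 : e n ≤ (1 / 2 : ℝ) ^ n0 := by
        rw [he]
        exact pow_le_pow_of_le_one (by norm_num) (by norm_num) (le_max_right _ _)
      calc dist sy z ≤ dist sy (xs n y) + dist (xs n y) z := dist_triangle _ _ _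
        _ < ε / 2 + (1 / 2 : ℝ) ^ n0 := by linarith
        _ < ε / 2 + ε / 2 := by linarith
        _ = ε := by ring
    rwa [(hSclosed y).closure_eq] at hcl

/-- The complement of the support of a measure is open. -/
private lemma isOpen_compl_msupport {X : Type*} [PseudoMetricSpace X] [MeasurableSpace X]
    (μ : Measure X) : IsOpen (Paper.msupport μ)ᶜ := by
  rw [Metric.isOpen_iff]
  intro x hx
  simp only [Paper.msupport, mem_compl_iff, mem_setOf_eq, not_forall] at hx
  push_neg at hx
  obtain ⟨r, hr, hμ⟩ := hx
  have hμ0 : μ (ball x r) = 0 := le_antisymm hμ zero_le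
  refine ⟨r, hr, fun z hz => ?_⟩
  simp only [Paper.msupport, mem_compl_iff, mem_setOf_eq, not_forall]
  push_neg
  refine ⟨r - dist z x, by simp only [mem_ball] at hz; linarith, ?_⟩
  rw [← hμ0]
  refine measure_mono fun w hw => ?_
  simp only [mem_ball] at hw ⊢
  calc dist w x ≤ dist w z + dist z x := dist_triangle _ _ _
    _ < r := by linarith

/-- The support of a measure is a null-complemented set (second countable case). -/
private lemma measure_compl_msupport {X : Type*} [PseudoMetricSpace X] [MeasurableSpace X]
    [SecondCountableTopology X] [OpensMeasurableSpace X] (μ : Measure X) :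
    μ (Paper.msupport μ)ᶜ = 0 := by
  classical
  have h : ∀ x ∈ (Paper.msupport μ)ᶜ, ∃ r > 0, μ (ball x r) = 0 := by
    intro x hx
    simp only [Paper.msupport, mem_compl_iff, mem_setOf_eq, not_forall] at hx
    push_neg at hx
    obtain ⟨r, hr, hμ⟩ := hx
    exact ⟨r, hr, le_antisymm hμ zero_le⟩
  choose! r hr hμr using h
  obtain ⟨t, hts, htc, htU⟩ := TopologicalSpace.countable_cover_nhdsWithin
    (f := fun x => ball x (r x)) (s := (Paper.msupport μ)ᶜ)
    (fun x hx => mem_nhdsWithin_of_mem_nhds (ball_mem_nhds x (hr x hx)))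
  refine measure_mono_null htU ?_
  rw [measure_biUnion_null_iff htc]
  exact fun x hx => hμr x (hts hx)

/-- The support of a measure is contained in any closed co-null set. -/
private lemma msupport_subset {X : Type*} [PseudoMetricSpace X] [MeasurableSpace X]
    {μ : Measure X} {K : Set X} (hK : IsClosed K) (h0 : μ Kᶜ = 0) :
    Paper.msupport μ ⊆ K := by
  intro x hx
  by_contra hxK
  obtain ⟨ρ, hρ, hsub⟩ := Metric.isOpen_iff.1 hK.isOpen_compl x hxK
  exact absurd (measure_mono_null hsub h0) (hx ρ hρ).ne'

end AuxLemmas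

/-- parts of Theorem `thm:pt-`: let `Tφ(y) = inf_x (φ(x) + c(x,y))` be
finite and attained in `closedBall y R` for every `y`. Then for every `ν ∈ 𝒫_c(ℝ^m)` the
potential energy `∫ Tφ dν` equals the infimum over `μ ∈ 𝒫_c` and plans `γ ∈ Γ(μ,ν)` of
`∫ (φ(x)+c(x,y)) dγ` (taken over plans with well-defined, i.e. integrable, cost); this
infimum is attained by a pair with `supp μ ⊆ ∪_{y ∈ supp ν} closedBall y R`; and any
minimizing pair satisfies `Tφ(y) = φ(x) + c(x,y)` on `supp γ`. -/
theorem statement14 {m : ℕ} (c : Em m → Em m → ℝ)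
    (hc : Continuous fun p : Em m × Em m => c p.1 p.2)
    (φ : Em m → ℝ) (hφ : LowerSemicontinuous φ)
    (R : ℝ) (hR : 0 < R) (T : Em m → ℝ)
    (hT : ∀ y : Em m, ∃ x ∈ closedBall y R,
      φ x + c x y = T y ∧ ∀ x' : Em m, T y ≤ φ x' + c x' y)
    (ν : Measure (Em m)) [IsProbabilityMeasure ν] (hν : IsCptSupp ν) :
    (∫ y, T y ∂ν =
      sInf {r : ℝ | ∃ (μ : Measure (Em m)) (γ : Measure (Em m × Em m)),
        IsProbabilityMeasure μ ∧ IsCptSupp μ ∧ IsCoupling γ μ ν ∧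
        Integrable (fun p : Em m × Em m => φ p.1 + c p.1 p.2) γ ∧
        r = ∫ p : Em m × Em m, (φ p.1 + c p.1 p.2) ∂γ}) ∧
    (∃ (μ : Measure (Em m)) (γ : Measure (Em m × Em m)),
      IsProbabilityMeasure μ ∧ IsCptSupp μ ∧ IsCoupling γ μ ν ∧
      Integrable (fun p : Em m × Em m => φ p.1 + c p.1 p.2) γ ∧
      msupport μ ⊆ (⋃ y ∈ msupport ν, closedBall y R) ∧
      ∫ p : Em m × Em m, (φ p.1 + c p.1 p.2) ∂γ = ∫ y, T y ∂ν) ∧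
    (∀ (μ : Measure (Em m)) (γ : Measure (Em m × Em m)),
      IsProbabilityMeasure μ → IsCptSupp μ → IsCoupling γ μ ν →
      Integrable (fun p : Em m × Em m => φ p.1 + c p.1 p.2) γ →
      (∫ p : Em m × Em m, (φ p.1 + c p.1 p.2) ∂γ) = ∫ y, T y ∂ν →
      ∀ p ∈ msupport γ, T p.2 = φ p.1 + c p.1 p.2) := by
  classical
  obtain ⟨K, hKc, hK0⟩ := hν
  have hKae : ∀ᵐ y ∂ν, y ∈ K := by
    rw [MeasureTheory.ae_iff]
    exact hK0
  set f : Em m × Em m → ℝ := fun p => φ p.1 + c p.1 p.2 with hfdef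
  have hφm : Measurable φ := hφ.measurable
  have hfm : Measurable f := (hφm.comp measurable_fst).add hc.measurable
  -- T is upper semicontinuous
  have hTusc : UpperSemicontinuous T := by
    intro y t hty
    obtain ⟨x, _, hxeq, _⟩ := hT y
    have hcc : Continuous fun z : Em m => φ x + c x z :=
      continuous_const.add (hc.comp (Continuous.prodMk_right x))
    have hopen : IsOpen {z : Em m | φ x + c x z < t} := isOpen_lt hcc continuous_const
    have hmem : y ∈ {z : Em m | φ x + c x z < t} := by
      simp only [mem_setOf_eq, hxeq]; exact hty
    filter_upwards [hopen.mem_nhds hmem] with z hz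
    obtain ⟨x', _, _, hmin⟩ := hT z
    exact lt_of_le_of_lt (hmin x) hz
  have hTm : Measurable T := hTusc.measurable
  -- T is integrable with respect to ν
  have hK'c : IsCompact (cthickening R K) := hKc.cthickening
  obtain ⟨B, hB⟩ := lsc_bddBelow hφ hK'c
  obtain ⟨C₀, hC₀⟩ := hKc.exists_bound_of_continuousOn
    (f := fun y : Em m => φ 0 + c 0 y)
    ((continuous_const.add (hc.comp (Continuous.prodMk_right (0 : Em m)))).continuousOn)
  obtain ⟨C₂, hC₂⟩ := (hK'c.prod hKc).exists_bound_of_continuousOn hc.continuousOn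
  have hTbound : ∀ y ∈ K, ‖T y‖ ≤ max C₀ (C₂ - B) := by
    intro y hy
    rw [Real.norm_eq_abs, abs_le]
    obtain ⟨x, hxb, hxeq, hmin⟩ := hT y
    have hxK' : x ∈ cthickening R K :=
      mem_cthickening_of_dist_le x y R K hy (mem_closedBall.1 hxb)
    have hBx : B ≤ φ x := hB x hxK'
    have hcx : -C₂ ≤ c x y := by
      have := hC₂ (x, y) (mem_prod.2 ⟨hxK', hy⟩)
      have habs := neg_abs_le (c x y)
      rw [Real.norm_eq_abs] at this
      linarith
    constructor
    · have h1 : B - C₂ ≤ T y := by rw [← hxeq]; linarith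
      have h2 : C₂ - B ≤ max C₀ (C₂ - B) := le_max_right _ _
      linarith
    · have h1 : T y ≤ φ 0 + c 0 y := hmin 0
      have h2 : φ 0 + c 0 y ≤ ‖φ 0 + c 0 y‖ := le_abs_self _
      have h3 := hC₀ y hy
      have h4 : C₀ ≤ max C₀ (C₂ - B) := le_max_left _ _
      linarith
  have hTint : Integrable T ν := by
    refine Integrable.mono' (integrable_const (max C₀ (C₂ - B)))
      hTm.aestronglyMeasurable ?_
    filter_upwards [hKae] with y hy using hTbound y hy
  -- generic lower bound for admissible plans
  have hlow : ∀ γ : Measure (Em m × Em m), γ.map Prod.snd = ν → Integrable f γ →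
      (∫ y, T y ∂ν ≤ ∫ p, f p ∂γ) ∧ Integrable (fun p : Em m × Em m => T p.2) γ ∧
        ∫ p : Em m × Em m, T p.2 ∂γ = ∫ y, T y ∂ν := by
    intro γ hsnd hfi
    have hTsm : AEStronglyMeasurable T (γ.map Prod.snd) := by
      rw [hsnd]; exact hTm.aestronglyMeasurable
    have hTint' : Integrable (fun p : Em m × Em m => T p.2) γ :=
      (integrable_map_measure hTsm measurable_snd.aemeasurable).1 (by rwa [hsnd])
    have heq : ∫ p : Em m × Em m, T p.2 ∂γ = ∫ y, T y ∂ν := by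
      rw [← hsnd]
      exact (integral_map measurable_snd.aemeasurable hTsm).symm
    refine ⟨?_, hTint', heq⟩
    rw [← heq]
    refine integral_mono hTint' hfi fun p => ?_
    obtain ⟨x', _, _, hmin⟩ := hT p.2
    exact hmin p.1
  -- lower semicontinuity of the excess function
  have hnegT : LowerSemicontinuous fun p : Em m × Em m => -T p.2 := by
    intro p y hy
    have husc : UpperSemicontinuous fun p : Em m × Em m => T p.2 :=
      UpperSemicontinuous.comp hTusc continuous_snd
    have hy' : y < -T p.2 := hy
    have hev := husc p (-y) (by show T p.2 < -y; linarith)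
    filter_upwards [hev] with z hz
    linarith
  have hfl : LowerSemicontinuous f :=
    (LowerSemicontinuous.comp hφ continuous_fst).add hc.lowerSemicontinuous
  have hgl : LowerSemicontinuous fun p : Em m × Em m => f p - T p.2 := by
    have := hfl.add hnegT
    simpa [sub_eq_add_neg] using this
  -- the argmin set and a measurable selection
  set A : Set (Em m × Em m) := {p | f p - T p.2 ≤ 0 ∧ dist p.1 p.2 ≤ R} with hAdef
  have hAclosed : IsClosed A := by
    have h1 : IsClosed {p : Em m × Em m | f p - T p.2 ≤ 0} := by
      have := hgl.isOpen_preimage 0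
      have heq : {p : Em m × Em m | f p - T p.2 ≤ 0} =
          ((fun p : Em m × Em m => f p - T p.2) ⁻¹' Ioi 0)ᶜ := by
        ext p; simp [not_lt]
      rw [heq]
      exact this.isClosed_compl
    have h2 : IsClosed {p : Em m × Em m | dist p.1 p.2 ≤ R} :=
      isClosed_le (continuous_fst.dist continuous_snd) continuous_const
    exact h1.inter h2
  have hAne : ∀ y : Em m, ∃ x, (x, y) ∈ A := by
    intro y
    obtain ⟨x, hxb, hxeq, _⟩ := hT y
    exact ⟨x, by simp only [hAdef, mem_setOf_eq]; exact ⟨by simp [hfdef, hxeq], mem_closedBall.1 hxb⟩⟩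
  obtain ⟨s, hsmeas, hsA⟩ := exists_meas_selection hAclosed hAne
  have hsT : ∀ y, f (s y, y) = T y := by
    intro y
    obtain ⟨x', _, _, hmin⟩ := hT y
    have h1 : f (s y, y) - T y ≤ 0 := (hsA y).1
    have h2 : T y ≤ f (s y, y) := hmin (s y)
    linarith
  have hsdist : ∀ y, dist (s y) y ≤ R := fun y => (hsA y).2
  -- the optimal plan
  set eγ : Em m → Em m × Em m := fun y => (s y, y) with heγ
  have heγm : Measurable eγ := hsmeas.prodMk measurable_id
  set γ₀ : Measure (Em m × Em m) := ν.map eγ with hγ₀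
  set μ₀ : Measure (Em m) := ν.map s with hμ₀
  have hcoup₀ : IsCoupling γ₀ μ₀ ν := by
    constructor
    · rw [hγ₀, Measure.map_map measurable_fst heγm, hμ₀]
      rfl
    · rw [hγ₀, Measure.map_map measurable_snd heγm]
      have : (Prod.snd ∘ eγ) = id := rfl
      rw [this, Measure.map_id]
  have hprob₀ : IsProbabilityMeasure μ₀ := Measure.isProbabilityMeasure_map hsmeas.aemeasurable
  have hcpt₀ : IsCptSupp μ₀ := by
    refine ⟨cthickening R K, hK'c, ?_⟩
    rw [hμ₀, Measure.map_apply hsmeas hK'c.isClosed.measurableSet.compl]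
    refine measure_mono_null (fun y hy => ?_) hK0
    intro hyK
    exact hy (mem_cthickening_of_dist_le (s y) y R K hyK (hsdist y))
  have hfint₀ : Integrable f γ₀ := by
    rw [hγ₀]
    refine (integrable_map_measure hfm.aestronglyMeasurable heγm.aemeasurable).2 ?_
    have hfe : (f ∘ eγ) = T := funext hsT
    rw [hfe]
    exact hTint
  have hval₀ : ∫ p, f p ∂γ₀ = ∫ y, T y ∂ν := by
    rw [hγ₀, integral_map heγm.aemeasurable hfm.aestronglyMeasurable]
    exact integral_congr_ae (Filter.Eventually.of_forall fun y => hsT y)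
  -- support of μ₀
  set SS := ⋃ y ∈ msupport ν, closedBall y R with hSSdef
  have hsupν_cl : IsClosed (msupport ν) := by
    have := isOpen_compl_msupport ν
    simpa using this.isClosed_compl
  have hsupν_K : msupport ν ⊆ K := msupport_subset hKc.isClosed hK0
  have hsupν_cpt : IsCompact (msupport ν) := hKc.of_isClosed_subset hsupν_cl hsupν_K
  have hSSeq : SS = cthickening R (msupport ν) :=
    (hsupν_cpt.cthickening_eq_biUnion_closedBall hR.le).symm
  have hSSclosed : IsClosed SS := by rw [hSSeq]; exact isClosed_cthickening
  have hμ₀SS : μ₀ SSᶜ = 0 := by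
    rw [hμ₀, Measure.map_apply hsmeas hSSclosed.measurableSet.compl]
    refine measure_mono_null (fun y hy => ?_) (measure_compl_msupport ν)
    intro hyM
    exact hy (mem_biUnion hyM (mem_closedBall.2 (hsdist y)))
  have hsupp₀ : msupport μ₀ ⊆ SS := msupport_subset hSSclosed hμ₀SS
  -- conclusion
  set V : Set ℝ := {r : ℝ | ∃ (μ : Measure (Em m)) (γ : Measure (Em m × Em m)),
      IsProbabilityMeasure μ ∧ IsCptSupp μ ∧ IsCoupling γ μ ν ∧
      Integrable (fun p : Em m × Em m => φ p.1 + c p.1 p.2) γ ∧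
      r = ∫ p : Em m × Em m, (φ p.1 + c p.1 p.2) ∂γ} with hVdef
  have hmemV : (∫ y, T y ∂ν) ∈ V :=
    ⟨μ₀, γ₀, hprob₀, hcpt₀, hcoup₀, hfint₀, hval₀.symm⟩
  have hlbV : ∀ r ∈ V, ∫ y, T y ∂ν ≤ r := by
    rintro r ⟨μ', γ', _, _, hcoup', hint', rfl⟩
    exact (hlow γ' hcoup'.2 hint').1
  refine ⟨le_antisymm (le_csInf ⟨_, hmemV⟩ hlbV) (csInf_le ⟨_, hlbV⟩ hmemV), ?_, ?_⟩
  · exact ⟨μ₀, γ₀, hprob₀, hcpt₀, hcoup₀, hfint₀, hsupp₀, hval₀⟩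
  · rintro μ' γ' _ _ hcoup' hint' hval' p hp
    obtain ⟨hge, hTint', heqT⟩ := hlow γ' hcoup'.2 hint'
    have hnn : 0 ≤ᵐ[γ'] fun p : Em m × Em m => f p - T p.2 := by
      refine Filter.Eventually.of_forall fun p => ?_
      obtain ⟨x', _, _, hmin⟩ := hT p.2
      have := hmin p.1
      simp only [Pi.zero_apply, sub_nonneg]
      exact this
    have hint0 : Integrable (fun p : Em m × Em m => f p - T p.2) γ' := hint'.sub hTint'
    have hzero : ∫ p : Em m × Em m, (f p - T p.2) ∂γ' = 0 := by
      rw [integral_sub hint' hTint', heqT, hval', sub_self]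
    have hae0 : (fun p : Em m × Em m => f p - T p.2) =ᵐ[γ'] 0 :=
      (integral_eq_zero_iff_of_nonneg_ae hnn hint0).1 hzero
    by_contra hne'
    have hppos : 0 < f p - T p.2 := by
      obtain ⟨x', _, _, hmin⟩ := hT p.2
      have hle := hmin p.1
      have hfp : f p = φ p.1 + c p.1 p.2 := rfl
      rcases lt_or_eq_of_le hle with h | h
      · rw [hfp]; linarith
      · exact absurd h hne'
    have hev := hgl p 0 hppos
    obtain ⟨r, hr, hball⟩ := Metric.eventually_nhds_iff_ball.1 hev
    have hpos := hp r hr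
    have hnull : γ' (ball p r) = 0 := by
      have hN : γ' {z : Em m × Em m | ¬ (f z - T z.2 = 0)} = 0 := by
        have := hae0
        rw [Filter.EventuallyEq, MeasureTheory.ae_iff] at this
        simpa using this
      refine measure_mono_null (fun z hz => ?_) hN
      exact (hball z hz).ne'
    exact absurd hnull hpos.ne'
end
end

section
/- Let κ₁ ≥ 0, κ₂ > 0 and a, b ≥ 0. Let φ : ℝ^m → ℝ be Borel measurable and (κ₁,κ₂)-Lipschitz in the large, and let c : ℝ^m × ℝ^m → ℝ be Borel measurable with c(x,y) ≥ (κ₁+1)|x−y| − a for all x, y ∈ ℝ^m and c(y,y) ≤ b for all y ∈ ℝ^m. Let C(μ,ν) := inf_{γ∈Γ(μ,ν)} ∫ c dγ and Φ(μ) := ∫ φ dμ. Fix ν ∈ 𝒫_c(ℝ^m). If μ ∈ 𝒫_c(ℝ^m) satisfies Φ(μ) + C(μ,ν) ≤ Φ(μ') + C(μ',ν) for all μ' ∈ 𝒫_c(ℝ^m), then W₁(μ,ν) ≤ a + b + κ₂. -/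
open MeasureTheory Metric Set
open scoped RealInnerProductSpace ENNReal

noncomputable section

open Paper

namespace Paper

/-- The extended-real transport cost `C(μ,ν) = inf_{γ ∈ Γ(μ,ν)} ∫ c dγ ∈ (−∞,+∞]`,
encoded—using a lower bound `c + a ≥ 0`—through the lower Lebesgue integral of the
nonnegative integrand `c + a`, shifted back by `a`. -/
def CcostE {m : ℕ} (c : Em m → Em m → ℝ) (a : ℝ) (μ ν : Measure (Em m)) : EReal :=
  sInf {r : EReal | ∃ γ : Measure (Em m × Em m), IsCoupling γ μ ν ∧
    r = ((∫⁻ p : Em m × Em m, ENNReal.ofReal (c p.1 p.2 + a) ∂γ : ℝ≥0∞) : EReal) -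
      (a : EReal)}

/-- The (extended-valued) 1-Wasserstein distance. -/
def W1E {m : ℕ} (μ ν : Measure (Em m)) : ℝ≥0∞ :=
  sInf {r : ℝ≥0∞ | ∃ γ : Measure (Em m × Em m), IsCoupling γ μ ν ∧
    r = ∫⁻ p : Em m × Em m, edist p.1 p.2 ∂γ}

end Paper


namespace Paper

lemma coupling_isProb {m : ℕ} {γ : Measure (Em m × Em m)} {μ ν : Measure (Em m)}
    [IsProbabilityMeasure μ] (h : IsCoupling γ μ ν) : IsProbabilityMeasure γ := by
  constructor
  calc γ Set.univ = γ (Prod.fst ⁻¹' Set.univ) := by rw [Set.preimage_univ]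
    _ = (γ.map Prod.fst) Set.univ := (Measure.map_apply measurable_fst MeasurableSet.univ).symm
    _ = μ Set.univ := by rw [h.1]
    _ = 1 := measure_univ

lemma coupling_null {m : ℕ} {γ : Measure (Em m × Em m)} {μ ν : Measure (Em m)}
    (h : IsCoupling γ μ ν) {K L : Set (Em m)} (hK : MeasurableSet K) (hL : MeasurableSet L)
    (hμK : μ Kᶜ = 0) (hνL : ν Lᶜ = 0) : γ ((K ×ˢ L)ᶜ) = 0 := by
  have hsub : (K ×ˢ L)ᶜ ⊆ (Prod.fst ⁻¹' Kᶜ) ∪ (Prod.snd ⁻¹' Lᶜ) := by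
    intro p hp
    by_cases h1 : p.1 ∈ K
    · right; intro h2; exact hp ⟨h1, h2⟩
    · left; exact h1
  refine measure_mono_null hsub (measure_union_null ?_ ?_)
  · rw [← h.1] at hμK
    rwa [Measure.map_apply measurable_fst hK.compl] at hμK
  · rw [← h.2] at hνL
    rwa [Measure.map_apply measurable_snd hL.compl] at hνL

end Paper

/-- part (4) of Theorem `thm:pt-`: a priori estimate on minimizers: if
`φ` is `(κ₁,κ₂)`-Lipschitz in the large, `c(x,y) ≥ (κ₁+1)|x−y| − a`, `c(y,y) ≤ b`, and
`μ ∈ 𝒫_c` minimizes `μ' ↦ Φ(μ') + C(μ',ν)` over `𝒫_c(ℝ^m)`, then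
`W₁(μ,ν) ≤ a + b + κ₂`. -/
theorem statement15 {m : ℕ} (κ₁ κ₂ a b : ℝ)
    (hκ₁ : 0 ≤ κ₁) (hκ₂ : 0 < κ₂) (ha : 0 ≤ a) (hb : 0 ≤ b)
    (φ : Em m → ℝ) (hφm : Measurable φ)
    (hφ : ∀ x y : Em m, |φ x - φ y| ≤ κ₁ * ‖x - y‖ + κ₂)
    (c : Em m → Em m → ℝ) (hcm : Measurable fun p : Em m × Em m => c p.1 p.2)
    (hlb : ∀ x y : Em m, (κ₁ + 1) * ‖x - y‖ - a ≤ c x y)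
    (hdiag : ∀ y : Em m, c y y ≤ b)
    (ν : Measure (Em m)) [IsProbabilityMeasure ν] (hν : IsCptSupp ν)
    (μ : Measure (Em m)) [IsProbabilityMeasure μ] (hμ : IsCptSupp μ)
    (hmin : ∀ μ' : Measure (Em m), IsProbabilityMeasure μ' → IsCptSupp μ' →
      (potential φ μ : EReal) + CcostE c a μ ν ≤
        (potential φ μ' : EReal) + CcostE c a μ' ν) :
    W1E μ ν ≤ ENNReal.ofReal (a + b + κ₂) := by
  classical
  obtain ⟨K, hKc, hμK⟩ := hμ
  obtain ⟨L, hLc, hνL⟩ := hν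
  have hKm : MeasurableSet K := hKc.isClosed.measurableSet
  have hLm : MeasurableSet L := hLc.isClosed.measurableSet
  obtain ⟨R, hRb⟩ : ∃ R : ℝ, ∀ x ∈ K ∪ L, ‖x‖ ≤ R := (hKc.union hLc).isBounded.exists_norm_le
  have hKne : K.Nonempty := by
    rw [Set.nonempty_iff_ne_empty]
    intro hne
    rw [hne, Set.compl_empty, measure_univ] at hμK
    exact one_ne_zero hμK
  obtain ⟨x0, hx0⟩ := hKne
  have hR0 : 0 ≤ R := (norm_nonneg x0).trans (hRb x0 (Or.inl hx0))
  -- a.e. membership facts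
  have haeμ : ∀ᵐ x ∂μ, x ∈ K := by rw [MeasureTheory.ae_iff]; exact hμK
  have haeν : ∀ᵐ x ∂ν, x ∈ L := by rw [MeasureTheory.ae_iff]; exact hνL
  -- the product coupling, finiteness of W1E
  have hprod : IsCoupling (μ.prod ν) μ ν := ⟨Measure.fst_prod, Measure.snd_prod⟩
  have hedist_bound : ∀ γ : Measure (Em m × Em m), IsCoupling γ μ ν →
      ∫⁻ p, edist p.1 p.2 ∂γ ≤ ENNReal.ofReal (2 * R) := by
    intro γ hγ
    haveI := coupling_isProb hγ
    have hae : ∀ᵐ p ∂γ, p ∈ K ×ˢ L := by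
      rw [MeasureTheory.ae_iff]
      exact coupling_null hγ hKm hLm hμK hνL
    calc ∫⁻ p, edist p.1 p.2 ∂γ ≤ ∫⁻ _, ENNReal.ofReal (2 * R) ∂γ := by
          refine lintegral_mono_ae (hae.mono fun p hp => ?_)
          rw [edist_dist]
          refine ENNReal.ofReal_le_ofReal ?_
          have h1 := hRb p.1 (Or.inl hp.1)
          have h2 := hRb p.2 (Or.inr hp.2)
          calc dist p.1 p.2 ≤ ‖p.1‖ + ‖p.2‖ := by
                rw [dist_eq_norm]; exact norm_sub_le _ _
            _ ≤ 2 * R := by linarith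
      _ = ENNReal.ofReal (2 * R) := by simp
  have hWle : W1E μ ν ≤ ENNReal.ofReal (2 * R) :=
    le_trans (sInf_le ⟨μ.prod ν, hprod, rfl⟩) (hedist_bound _ hprod)
  have hWfin : W1E μ ν ≠ ⊤ := (lt_of_le_of_lt hWle ENNReal.ofReal_lt_top).ne
  set w := (W1E μ ν).toReal with hwdef
  have hw0 : 0 ≤ w := ENNReal.toReal_nonneg
  -- bound on φ
  set M := |φ 0| + (κ₁ * R + κ₂) with hMdef
  have hφb : ∀ x : Em m, x ∈ K ∪ L → |φ x| ≤ M := by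
    intro x hx
    have h1 := hφ x 0
    rw [sub_zero] at h1
    have h2 := hRb x hx
    have h3 : κ₁ * ‖x‖ ≤ κ₁ * R := mul_le_mul_of_nonneg_left h2 hκ₁
    have h4 : |φ x| - |φ 0| ≤ |φ x - φ 0| := abs_sub_abs_le_abs_sub _ _
    rw [hMdef]; linarith
  have Iφμ : Integrable φ μ :=
    (integrable_const M).mono' hφm.aestronglyMeasurable
      (haeμ.mono fun x hx => by simpa [Real.norm_eq_abs] using hφb x (Or.inl hx))
  have Iφν : Integrable φ ν :=
    (integrable_const M).mono' hφm.aestronglyMeasurable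
      (haeν.mono fun x hx => by simpa [Real.norm_eq_abs] using hφb x (Or.inr hx))
  -- Step C: for every ε > 0, Φν - Φμ ≤ κ₁ (w + ε) + κ₂
  have hC : ∀ ε : ℝ, 0 < ε → potential φ ν - potential φ μ ≤ κ₁ * (w + ε) + κ₂ := by
    intro ε hε
    have hlt : W1E μ ν < W1E μ ν + ENNReal.ofReal ε :=
      ENNReal.lt_add_right hWfin (ENNReal.ofReal_pos.mpr hε).ne'
    obtain ⟨r, ⟨γ, hγc, rfl⟩, hrlt⟩ := sInf_lt_iff.mp
      (show sInf {r : ℝ≥0∞ | ∃ γ : Measure (Em m × Em m), IsCoupling γ μ ν ∧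
        r = ∫⁻ p : Em m × Em m, edist p.1 p.2 ∂γ} < W1E μ ν + ENNReal.ofReal ε from hlt)
    haveI := coupling_isProb hγc
    have haeγ : ∀ᵐ p ∂γ, p ∈ K ×ˢ L := by
      rw [MeasureTheory.ae_iff]
      exact coupling_null hγc hKm hLm hμK hνL
    have Iφ1 : Integrable (fun p : Em m × Em m => φ p.1) γ :=
      (integrable_const M).mono' (hφm.comp measurable_fst).aestronglyMeasurable
        (haeγ.mono fun p hp => by simpa [Real.norm_eq_abs] using hφb p.1 (Or.inl hp.1))
    have Iφ2 : Integrable (fun p : Em m × Em m => φ p.2) γ :=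
      (integrable_const M).mono' (hφm.comp measurable_snd).aestronglyMeasurable
        (haeγ.mono fun p hp => by simpa [Real.norm_eq_abs] using hφb p.2 (Or.inr hp.2))
    have Inorm : Integrable (fun p : Em m × Em m => ‖p.1 - p.2‖) γ :=
      (integrable_const (2 * R)).mono'
        ((measurable_fst.sub measurable_snd).norm).aestronglyMeasurable
        (haeγ.mono fun p hp => by
          have h1 := hRb p.1 (Or.inl hp.1)
          have h2 := hRb p.2 (Or.inr hp.2)
          have h3 := norm_sub_le p.1 p.2
          simp only [Real.norm_eq_abs, abs_of_nonneg (norm_nonneg _)]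
          linarith)
    have hmono : ∫ p, (φ p.2 - φ p.1) ∂γ ≤ ∫ p, (κ₁ * ‖p.1 - p.2‖ + κ₂) ∂γ := by
      refine integral_mono (Iφ2.sub Iφ1) ((Inorm.const_mul κ₁).add (integrable_const κ₂))
        fun p => ?_
      calc φ p.2 - φ p.1 ≤ |φ p.2 - φ p.1| := le_abs_self _
        _ ≤ κ₁ * ‖p.2 - p.1‖ + κ₂ := hφ p.2 p.1
        _ = κ₁ * ‖p.1 - p.2‖ + κ₂ := by rw [norm_sub_rev]
    have hmap1 : ∫ p, φ p.1 ∂γ = potential φ μ := by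
      rw [potential, ← hγc.1,
        integral_map measurable_fst.aemeasurable hφm.aestronglyMeasurable]
    have hmap2 : ∫ p, φ p.2 ∂γ = potential φ ν := by
      rw [potential, ← hγc.2,
        integral_map measurable_snd.aemeasurable hφm.aestronglyMeasurable]
    have hsubeq : ∫ p, (φ p.2 - φ p.1) ∂γ = potential φ ν - potential φ μ := by
      rw [integral_sub Iφ2 Iφ1, hmap1, hmap2]
    have hRHS : ∫ p, (κ₁ * ‖p.1 - p.2‖ + κ₂) ∂γ
        = κ₁ * ∫ p, ‖p.1 - p.2‖ ∂γ + κ₂ := by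
      rw [integral_add (Inorm.const_mul κ₁) (integrable_const κ₂), integral_const_mul,
        integral_const]
      simp
    have hnormint : ∫ p, ‖p.1 - p.2‖ ∂γ ≤ w + ε := by
      have heq : ENNReal.ofReal (∫ p, ‖p.1 - p.2‖ ∂γ) = ∫⁻ p, edist p.1 p.2 ∂γ := by
        rw [MeasureTheory.ofReal_integral_eq_lintegral_ofReal Inorm
          (Filter.Eventually.of_forall fun p => norm_nonneg _)]
        refine lintegral_congr fun p => ?_
        rw [edist_eq_enorm_sub, ← ofReal_norm_eq_enorm]
      have h1 : ENNReal.ofReal (∫ p, ‖p.1 - p.2‖ ∂γ) ≤ ENNReal.ofReal (w + ε) := by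
        rw [heq]
        refine le_of_lt (lt_of_lt_of_le hrlt ?_)
        rw [ENNReal.ofReal_add hw0 hε.le, ENNReal.ofReal_toReal hWfin]
      exact (ENNReal.ofReal_le_ofReal_iff (by positivity)).mp h1
    have h2 : κ₁ * ∫ p, ‖p.1 - p.2‖ ∂γ ≤ κ₁ * (w + ε) :=
      mul_le_mul_of_nonneg_left hnormint hκ₁
    rw [← hsubeq]
    refine hmono.trans ?_
    rw [hRHS]
    linarith
  -- diagonal coupling : C(ν,ν) ≤ b
  have hdmeas : Measurable (fun y : Em m => (y, y)) := measurable_id.prodMk measurable_id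
  have hdcoup : IsCoupling (ν.map fun y => (y, y)) ν ν := by
    constructor
    · rw [Measure.map_map measurable_fst hdmeas]
      simp [Function.comp_def]
    · rw [Measure.map_map measurable_snd hdmeas]
      simp [Function.comp_def]
  have hLd : (∫⁻ p : Em m × Em m, ENNReal.ofReal (c p.1 p.2 + a) ∂(ν.map fun y => (y, y)))
      ≤ ENNReal.ofReal (b + a) := by
    rw [lintegral_map (f := fun p : Em m × Em m => ENNReal.ofReal (c p.1 p.2 + a)) ((hcm.add measurable_const).ennreal_ofReal) hdmeas]
    calc ∫⁻ y, ENNReal.ofReal (c y y + a) ∂ν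
        ≤ ∫⁻ _, ENNReal.ofReal (b + a) ∂ν :=
          lintegral_mono fun y => ENNReal.ofReal_le_ofReal (by have := hdiag y; linarith)
      _ = ENNReal.ofReal (b + a) := by simp
  have hcoe : ∀ x : ℝ, 0 ≤ x → ((ENNReal.ofReal x : ℝ≥0∞) : EReal) = (x : EReal) := by
    intro x hx
    rw [EReal.coe_ennreal_ofReal]
    exact congrArg _ (max_eq_left hx)
  have hdiagC : CcostE c a ν ν ≤ (b : EReal) := by
    refine le_trans (sInf_le ⟨ν.map fun y => (y, y), hdcoup, rfl⟩) ?_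
    have h1 : ((∫⁻ p : Em m × Em m, ENNReal.ofReal (c p.1 p.2 + a)
        ∂(ν.map fun y => (y, y)) : ℝ≥0∞) : EReal) ≤ ((b + a : ℝ) : EReal) := by
      rw [← hcoe (b + a) (by linarith)]
      exact EReal.coe_ennreal_le_coe_ennreal_iff.mpr hLd
    calc _ ≤ ((b + a : ℝ) : EReal) - (a : EReal) := EReal.sub_le_sub h1 le_rfl
      _ = (b : EReal) := by rw [← EReal.coe_sub]; norm_num
  -- Step A
  have hA : (potential φ μ : EReal) + CcostE c a μ ν ≤ ((potential φ ν + b : ℝ) : EReal) := by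
    refine (hmin ν inferInstance ⟨L, hLc, hνL⟩).trans ?_
    calc (potential φ ν : EReal) + CcostE c a ν ν
        ≤ (potential φ ν : EReal) + (b : EReal) := add_le_add_right hdiagC _
      _ = ((potential φ ν + b : ℝ) : EReal) := by rw [EReal.coe_add]
  -- Step B : lower bound on C(μ,ν)
  have hB : (((κ₁ + 1) * w - a : ℝ) : EReal) ≤ CcostE c a μ ν := by
    refine le_sInf ?_
    rintro r ⟨γ, hγc, rfl⟩
    have hLlb : ENNReal.ofReal ((κ₁ + 1) * w)
        ≤ ∫⁻ p : Em m × Em m, ENNReal.ofReal (c p.1 p.2 + a) ∂γ := by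
      have h1 : ∀ p : Em m × Em m,
          ENNReal.ofReal (κ₁ + 1) * edist p.1 p.2 ≤ ENNReal.ofReal (c p.1 p.2 + a) := by
        intro p
        rw [edist_eq_enorm_sub, ← ofReal_norm_eq_enorm,
          ← ENNReal.ofReal_mul (by linarith)]
        exact ENNReal.ofReal_le_ofReal (by have := hlb p.1 p.2; linarith)
      have hWw : W1E μ ν = ENNReal.ofReal w := by
        rw [hwdef, ENNReal.ofReal_toReal hWfin]
      have hWγ : W1E μ ν ≤ ∫⁻ p, edist p.1 p.2 ∂γ :=
        sInf_le ⟨γ, hγc, rfl⟩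
      calc ENNReal.ofReal ((κ₁ + 1) * w) = ENNReal.ofReal (κ₁ + 1) * W1E μ ν := by
            rw [hWw, ← ENNReal.ofReal_mul (by linarith)]
        _ ≤ ENNReal.ofReal (κ₁ + 1) * ∫⁻ p, edist p.1 p.2 ∂γ :=
            mul_le_mul_right hWγ _
        _ = ∫⁻ p, ENNReal.ofReal (κ₁ + 1) * edist p.1 p.2 ∂γ :=
            (lintegral_const_mul _ (measurable_fst.edist measurable_snd)).symm
        _ ≤ _ := lintegral_mono h1
    have h2 : (((κ₁ + 1) * w : ℝ) : EReal)
        ≤ ((∫⁻ p : Em m × Em m, ENNReal.ofReal (c p.1 p.2 + a) ∂γ : ℝ≥0∞) : EReal) := by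
      rw [← hcoe ((κ₁ + 1) * w) (by positivity)]
      exact EReal.coe_ennreal_le_coe_ennreal_iff.mpr hLlb
    calc (((κ₁ + 1) * w - a : ℝ) : EReal)
        = (((κ₁ + 1) * w : ℝ) : EReal) - (a : EReal) := by rw [← EReal.coe_sub]
      _ ≤ _ := EReal.sub_le_sub h2 le_rfl
  have hAB : potential φ μ + ((κ₁ + 1) * w - a) ≤ potential φ ν + b := by
    have h1 := (add_le_add_right hB (potential φ μ : EReal)).trans hA
    rw [← EReal.coe_add] at h1
    exact_mod_cast h1
  have hkey : ∀ ε : ℝ, 0 < ε → w ≤ a + b + κ₂ + κ₁ * ε := by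
    intro ε hε
    have := hC ε hε
    nlinarith
  have hfin : w ≤ a + b + κ₂ := by
    by_contra hcon
    push_neg at hcon
    set d := w - (a + b + κ₂) with hd
    have hd0 : 0 < d := by rw [hd]; linarith
    set ε := d / (κ₁ + 1) with hεdef
    have hε : 0 < ε := by positivity
    have h2 : (κ₁ + 1) * ε = d := by rw [hεdef]; field_simp
    have := hkey ε hε
    have h3 : κ₁ * ε = d - ε := by linarith
    rw [hd] at h3
    linarith
  calc W1E μ ν = ENNReal.ofReal w := (ENNReal.ofReal_toReal hWfin).symm
    _ ≤ ENNReal.ofReal (a + b + κ₂) := ENNReal.ofReal_le_ofReal hfin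
end
end
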